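/- arXiv:2410.12227 — 10 statements merged into one kernel-verified Lean document; each statement's English description precedes it below -/
import Mathlib

section
/- Let (R,m,k) be a commutative Noetherian local ring and let M be a nonzero finitely generated R-module. Then k is a direct summand of M if and only if soc(M) is not contained in m·M. In particular, k is a direct summand of m if and only if soc(R) is not contained in m². -/
open IsLocalRing

universe u

/-- `k = R/m` is a direct summand of the `R`-module `M`, i.e. `M ≅ k ⊕ N` for some `N`. -/
def ResidueFieldIsSummand (R : Type u) [CommRing R] [IsLocalRing R]
    (M : Type u) [AddCommGroup M] [Module R M] : Prop :=
  ∃ p q : Submodule R M, IsCompl p q ∧ Nonempty (p ≃ₗ[R] ResidueField R)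

/-!
If `M = p ⊕ q` with `p ≅ k`, the generator of `p` is killed by `m`, and the projection `M → k`
kills `mM` but not that generator. Conversely, a socle element `x ∉ mM` gives `k → M, 1 ↦ x`, and
since `M/mM` is a `k`-vector space in which `x` is nonzero, some functional `M → M/mM → k` sends `x`
to `1`; together the two maps split `k` off `M`. For `M = m` one uses that the socle of `R` lies
in `m` unless `R` is a field, and that `m • m = m²`.
-/

namespace Submodule

variable {R M P : Type*} [Ring R] [AddCommGroup M] [Module R M] [AddCommGroup P] [Module R P]

theorem exists_isCompl_nonempty_linearEquiv_iff_exists_comp_eq_id :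
    (∃ p q : Submodule R M, IsCompl p q ∧ Nonempty (p ≃ₗ[R] P)) ↔
      ∃ (s : P →ₗ[R] M) (f : M →ₗ[R] P), f ∘ₗ s = LinearMap.id := by
  constructor
  · rintro ⟨p, q, hpq, ⟨e⟩⟩
    refine ⟨p.subtype ∘ₗ e.symm.toLinearMap, e.toLinearMap ∘ₗ p.projectionOnto q hpq, ?_⟩
    ext y
    simp [projectionOnto_apply_left]
  · rintro ⟨s, f, hfs⟩
    have hs : Function.Injective s := LinearMap.injective_of_comp_eq_id s f hfs
    refine ⟨LinearMap.range s, LinearMap.ker f, ?_, ⟨(LinearEquiv.ofInjective s hs).symm⟩⟩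
    have hker : LinearMap.ker (s.rangeRestrict ∘ₗ f) = LinearMap.ker f :=
      LinearMap.ker_comp_of_ker_eq_bot _
        (LinearMap.ker_rangeRestrict s ▸ LinearMap.ker_eq_bot.mpr hs)
    rw [← hker]
    refine LinearMap.isCompl_of_proj ?_
    rintro ⟨_, y, rfl⟩
    ext
    simp [← LinearMap.comp_apply f s, hfs]

theorem comap_subtype_torsionBySet {R M : Type*} [CommRing R] [AddCommGroup M] [Module R M]
    (N : Submodule R M) (s : Set R) :
    (torsionBySet R M s).comap N.subtype = torsionBySet R N s := by
  ext z
  simp only [mem_comap, subtype_apply, mem_torsionBySet_iff, ← coe_smul, coe_eq_zero]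

end Submodule

namespace IsLocalRing

variable {R : Type u} [CommRing R] [IsLocalRing R]

section

variable {M : Type*} [AddCommGroup M] [Module R M]

theorem ResidueField.smul_eq_zero_of_mem_maximalIdeal {a : R} (ha : a ∈ maximalIdeal R)
    (c : ResidueField R) : a • c = 0 := by
  rw [Algebra.smul_def, ResidueField.algebraMap_eq, (residue_eq_zero_iff a).mpr ha, zero_mul]

theorem maximalIdeal_smul_top_le_ker (f : M →ₗ[R] ResidueField R) :
    maximalIdeal R • (⊤ : Submodule R M) ≤ LinearMap.ker f :=
  Submodule.smul_le.mpr fun a ha y _ => by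
    rw [LinearMap.mem_ker, map_smul, ResidueField.smul_eq_zero_of_mem_maximalIdeal ha]

theorem exists_linearMap_residueField_apply_eq_one {x : M}
    (hx : x ∉ maximalIdeal R • (⊤ : Submodule R M)) :
    ∃ f : M →ₗ[R] ResidueField R, f x = 1 := by
  -- `M ⧸ mM` is a module over `R ⧸ m`, which has no global `Field` instance.
  let _ := Ideal.Quotient.field (maximalIdeal R)
  obtain ⟨φ, hφ⟩ := Module.Projective.exists_dual_eq_one (R ⧸ maximalIdeal R)
    (x := Submodule.Quotient.mk (p := maximalIdeal R • (⊤ : Submodule R M)) x)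
    ((Submodule.Quotient.mk_eq_zero _).not.mpr hx)
  exact ⟨φ.restrictScalars R ∘ₗ Submodule.mkQ _, hφ⟩

theorem exists_linearMap_of_residueField_apply_one {x : M}
    (hx : x ∈ Submodule.torsionBySet R M (maximalIdeal R)) :
    ∃ s : ResidueField R →ₗ[R] M, s 1 = x :=
  ⟨(maximalIdeal R).liftQ (LinearMap.toSpanSingleton R M x) fun a ha =>
      (Submodule.mem_torsionBySet_iff _ _).mp hx ⟨a, ha⟩,
    (Submodule.liftQ_apply _ _ (1 : R)).trans (one_smul R x)⟩

end

theorem residueFieldIsSummand_iff (M : Type u) [AddCommGroup M] [Module R M] :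
    ResidueFieldIsSummand R M ↔
      ¬ Submodule.torsionBySet R M (maximalIdeal R) ≤ maximalIdeal R • (⊤ : Submodule R M) := by
  rw [ResidueFieldIsSummand, Submodule.exists_isCompl_nonempty_linearEquiv_iff_exists_comp_eq_id,
    SetLike.not_le_iff_exists]
  constructor
  · rintro ⟨s, f, hfs⟩
    refine ⟨s 1, (Submodule.mem_torsionBySet_iff _ _).mpr fun ⟨a, ha⟩ => ?_, fun hmem => ?_⟩
    · rw [← map_smul, ResidueField.smul_eq_zero_of_mem_maximalIdeal ha, map_zero]
    · have hfs1 : f (s 1) = 1 := LinearMap.congr_fun hfs 1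
      exact one_ne_zero (hfs1.symm.trans (maximalIdeal_smul_top_le_ker f hmem))
  · rintro ⟨x, hsoc, hx⟩
    obtain ⟨s, hs⟩ := exists_linearMap_of_residueField_apply_one hsoc
    obtain ⟨f, hf⟩ := exists_linearMap_residueField_apply_eq_one hx
    refine ⟨s, f, Submodule.linearMap_qext _ (LinearMap.ext_ring ?_)⟩
    change f (s 1) = 1
    rw [hs, hf]

theorem torsionBySet_maximalIdeal_le_maximalIdeal (hR : ¬ IsField R) :
    Submodule.torsionBySet R R (maximalIdeal R) ≤ maximalIdeal R := by
  intro x hx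
  by_contra hxm
  obtain ⟨u, rfl⟩ := notMem_maximalIdeal.mp hxm
  refine hR (isField_iff_maximalIdeal_eq.mpr (eq_bot_iff.mpr fun a ha => ?_))
  have hax : a * u = 0 := (Submodule.mem_torsionBySet_iff _ _).mp hx ⟨a, ha⟩
  exact (Units.mul_left_eq_zero u).mp hax

theorem residueFieldIsSummand_maximalIdeal_iff (hR : ¬ IsField R) :
    ResidueFieldIsSummand R (maximalIdeal R) ↔
      ¬ Submodule.torsionBySet R R (maximalIdeal R) ≤ maximalIdeal R ^ 2 := by
  rw [residueFieldIsSummand_iff, ← Submodule.map_le_map_iff_of_injective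
      (maximalIdeal R).injective_subtype, ← Submodule.comap_subtype_torsionBySet,
    Submodule.map_comap_subtype, inf_eq_right.mpr (torsionBySet_maximalIdeal_le_maximalIdeal hR),
    Submodule.map_smul'', Submodule.map_top, Submodule.range_subtype, sq, smul_eq_mul]

end IsLocalRing

theorem stmt0_general (R : Type u) [CommRing R] [IsLocalRing R]
    (hR : ¬ IsField R)
    (M : Type u) [AddCommGroup M] [Module R M] :
    (ResidueFieldIsSummand R M ↔
      ¬ Submodule.torsionBySet R M (maximalIdeal R : Set R) ≤
          (maximalIdeal R) • (⊤ : Submodule R M)) ∧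
    (ResidueFieldIsSummand R (maximalIdeal R) ↔
      ¬ Submodule.torsionBySet R R (maximalIdeal R : Set R) ≤ (maximalIdeal R) ^ 2) :=
  ⟨residueFieldIsSummand_iff M, residueFieldIsSummand_maximalIdeal_iff hR⟩

theorem stmt0 (R : Type u) [CommRing R] [IsNoetherianRing R] [IsLocalRing R]
    (hR : ¬ IsField R)
    (M : Type u) [AddCommGroup M] [Module R M] [Module.Finite R M] [Nontrivial M] :
    (ResidueFieldIsSummand R M ↔
      ¬ Submodule.torsionBySet R M (maximalIdeal R : Set R) ≤
          (maximalIdeal R) • (⊤ : Submodule R M)) ∧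
    (ResidueFieldIsSummand R (maximalIdeal R) ↔
      ¬ Submodule.torsionBySet R R (maximalIdeal R : Set R) ≤ (maximalIdeal R) ^ 2) :=
  stmt0_general R hR M
end

section
/- Let (R,m,k) be an artinian local ring such that soc(R) is not contained in m² (equivalently, k is a direct summand of Ω²(M) for every non-free finitely generated R-module M) and such that R is not injective as a module over itself (i.e., R is not Gorenstein). Then every finitely generated reflexive R-module is free. -/
/-!
Pick `s ∈ soc(R) \ 𝔪²` and write `k` for the residue field.

If `k` were reflexive, then `soc(R) ≅ k*` would be one-dimensional over `k` (otherwise `k**` is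
too big), so `soc(R) = (s)`. Every nonzero ideal of an artinian local ring meets the socle, and
`s ∉ 𝔪²`, so `𝔪² = 0`, i.e. `𝔪 ⊆ soc(R) = (s)`; the only ideals are then `0`, `(s)`, `R`, and
Baer's criterion makes `R` self-injective. Hence `k` is not reflexive.

Now let `N ≠ 0` be finite and reflexive. A surjective functional splits off a copy of `R` and
leaves a reflexive module of smaller length. If there is none, every functional takes values in
`𝔪`. Take `λ ∈ N* \ 𝔪N*`; the functional `N* → N*/𝔪N* → k → R` sending `λ` to `s` is evaluation
at some `x ∈ N` with `𝔪x = 0` and `λ x = s ∉ 𝔪² ⊇ λ(𝔪N)`. So `x ∉ 𝔪N`, `k` is a direct summand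
of `N`, and `k` would be reflexive.
-/

open IsLocalRing Module

universe u

lemma Module.nontrivial_dual_of_isReflexive {R : Type u} [CommRing R] (N : Type u)
    [AddCommGroup N] [Module R N] [IsReflexive R N] [Nontrivial N] : Nontrivial (Dual R N) := by
  by_contra h
  rw [not_nontrivial_iff_subsingleton] at h
  have : Nontrivial (Dual R (Dual R N)) := (evalEquiv R N).symm.toEquiv.nontrivial
  exact not_subsingleton (Dual R (Dual R N)) inferInstance

lemma Module.nonempty_linearEquiv_ker_prod_of_surjective {R : Type u} [CommRing R]
    {N : Type u} [AddCommGroup N] [Module R N] {f : Dual R N} (hf : Function.Surjective f) :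
    Nonempty (N ≃ₗ[R] LinearMap.ker f × R) := by
  obtain ⟨l, hl⟩ := projective_lifting_property f LinearMap.id hf
  exact ⟨((LinearMap.exact_subtype_ker_map f).splitSurjectiveEquiv
    (Submodule.injective_subtype _) ⟨l, hl⟩).1⟩

theorem Module.free_of_forall_exists_surjective_dual {R : Type u} [CommRing R] [IsArtinianRing R]
    (h : ∀ (N : Type u) [AddCommGroup N] [Module R N] [Module.Finite R N] [IsReflexive R N]
      [Nontrivial N], ∃ f : Dual R N, Function.Surjective f)
    (M : Type u) [AddCommGroup M] [Module R M] [Module.Finite R M] [IsReflexive R M] :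
    Module.Free R M := by
  induction hn : Module.length R M using WellFoundedLT.induction generalizing M with
  | ind n ih =>
  cases subsingleton_or_nontrivial M
  · exact Module.Free.of_subsingleton R M
  have : Nontrivial R := Module.nontrivial R M
  obtain ⟨f, hf⟩ := h M
  obtain ⟨e⟩ := nonempty_linearEquiv_ker_prod_of_surjective hf
  have : IsReflexive R (LinearMap.ker f × R) := Module.equiv e
  have : IsReflexive R (LinearMap.ker f) :=
    IsReflexive.of_split (LinearMap.inl R _ R) (LinearMap.fst R _ R) (LinearMap.fst_comp_inl R _ R)
  have hlen : Module.length R (LinearMap.ker f) < n := by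
    rw [← hn, Module.length_eq_add_of_exact _ f (Submodule.injective_subtype _) hf
      (LinearMap.exact_subtype_ker_map f)]
    calc Module.length R (LinearMap.ker f) = Module.length R (LinearMap.ker f) + 0 :=
          (add_zero _).symm
      _ < Module.length R (LinearMap.ker f) + Module.length R R :=
          WithTop.add_lt_add_left (Module.length_ne_top (M := LinearMap.ker f)) Module.length_pos
  have := ih _ hlen (LinearMap.ker f) rfl
  exact Module.Free.of_equiv e.symm

namespace IsLocalRing

section LocalRing

variable {R : Type u} [CommRing R] [IsLocalRing R]

variable (R) in
def socle : Ideal R := Submodule.torsionBySet R R (maximalIdeal R : Set R)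

lemma mem_socle {x : R} : x ∈ socle R ↔ ∀ t ∈ maximalIdeal R, t * x = 0 :=
  ⟨fun h t ht => (Submodule.mem_torsionBySet_iff _ _).mp h ⟨t, ht⟩,
    fun h => (Submodule.mem_torsionBySet_iff _ _).mpr fun t => h t.1 t.2⟩

lemma smul_residueField_eq_zero {t : R} (ht : t ∈ maximalIdeal R) (c : ResidueField R) :
    t • c = 0 := by
  rw [Algebra.smul_def, ResidueField.algebraMap_eq, (residue_eq_zero_iff t).mpr ht, zero_mul]

variable {M : Type u} [AddCommGroup M] [Module R M]

noncomputable def residueFieldToSpanSingleton (x : M) (hx : ∀ t ∈ maximalIdeal R, t • x = 0) :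
    ResidueField R →ₗ[R] M :=
  (maximalIdeal R).liftQ (LinearMap.toSpanSingleton R M x) hx

@[simp]
lemma residueFieldToSpanSingleton_residue (x : M) (hx : ∀ t ∈ maximalIdeal R, t • x = 0) (r : R) :
    residueFieldToSpanSingleton x hx (residue R r) = r • x :=
  rfl

@[simp]
lemma residueFieldToSpanSingleton_one (x : M) (hx : ∀ t ∈ maximalIdeal R, t • x = 0) :
    residueFieldToSpanSingleton x hx 1 = x := by
  simpa using residueFieldToSpanSingleton_residue x hx 1

lemma exists_residueField_functional_eq_one {v : M}
    (hv : v ∉ maximalIdeal R • (⊤ : Submodule R M)) : ∃ g : M →ₗ[R] ResidueField R, g v = 1 := by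
  let _ : Module (ResidueField R) (M ⧸ maximalIdeal R • (⊤ : Submodule R M)) :=
    inferInstanceAs (Module (R ⧸ maximalIdeal R) _)
  have _ : IsScalarTower R (ResidueField R) (M ⧸ maximalIdeal R • (⊤ : Submodule R M)) :=
    inferInstanceAs (IsScalarTower R (R ⧸ maximalIdeal R) _)
  obtain ⟨f, hf⟩ := Projective.exists_dual_eq_one (ResidueField R)
    (x := (maximalIdeal R • (⊤ : Submodule R M)).mkQ v)
    (by rwa [Ne, Submodule.mkQ_apply, Submodule.Quotient.mk_eq_zero])
  exact ⟨(f.restrictScalars R : _ →ₗ[R] ResidueField R) ∘ₗ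
    (maximalIdeal R • (⊤ : Submodule R M)).mkQ, hf⟩

lemma maximalIdeal_smul_top_ne_top (N : Type u) [AddCommGroup N] [Module R N] [Nontrivial N]
    [Module.Finite R N] : maximalIdeal R • (⊤ : Submodule R N) ≠ ⊤ :=
  (Submodule.top_ne_ideal_smul_of_le_jacobson_annihilator (maximalIdeal_le_jacobson _)).symm

lemma isReflexive_residueField_of_smul_eq_zero_of_notMem_smul_top [IsReflexive R M] {x : M}
    (hx : ∀ t ∈ maximalIdeal R, t • x = 0) (hx' : x ∉ maximalIdeal R • (⊤ : Submodule R M)) :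
    IsReflexive R (ResidueField R) := by
  obtain ⟨p, hp⟩ := exists_residueField_functional_eq_one hx'
  refine IsReflexive.of_split (residueFieldToSpanSingleton x hx) p (LinearMap.ext fun c => ?_)
  obtain ⟨r, rfl⟩ := residue_surjective c
  simp [hp, Algebra.smul_def]

lemma maximalIdeal_smul_top_dual_residueField_eq_bot :
    maximalIdeal R • (⊤ : Submodule R (Dual R (ResidueField R))) = ⊥ :=
  eq_bot_iff.mpr <| Submodule.smul_le.mpr fun t ht f _ => by
    ext c
    rw [LinearMap.smul_apply, ← map_smul, smul_residueField_eq_zero ht, map_zero,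
      LinearMap.zero_apply]

lemma socle_le_span_of_isReflexive_residueField [IsReflexive R (ResidueField R)] {x : R}
    (hx : x ∈ socle R) (hx0 : x ≠ 0) : socle R ≤ Ideal.span {x} := by
  intro y hy
  let fx := residueFieldToSpanSingleton x (mem_socle.mp hx)
  have hfx : fx ∉ maximalIdeal R • (⊤ : Submodule R (Dual R (ResidueField R))) := by
    rw [maximalIdeal_smul_top_dual_residueField_eq_bot, Submodule.mem_bot]
    exact fun h => hx0 (by simpa [fx] using LinearMap.congr_fun h 1)
  obtain ⟨g, hg⟩ := exists_residueField_functional_eq_one hfx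
  obtain ⟨c, hc⟩ := (bijective_dual_eval R (ResidueField R)).2
    (residueFieldToSpanSingleton y (mem_socle.mp hy) ∘ₗ g)
  obtain ⟨a, rfl⟩ := residue_surjective c
  have := LinearMap.congr_fun hc fx
  simp only [Dual.eval_apply, LinearMap.comp_apply, hg, residueFieldToSpanSingleton_one] at this
  exact Ideal.mem_span_singleton'.mpr ⟨a, by simpa [fx] using this⟩

lemma injective_self_of_maximalIdeal_le_socle {x : R} (hm : maximalIdeal R ≤ socle R)
    (hx : socle R = Ideal.span {x}) : Module.Injective R R := by
  refine Module.Baer.injective fun I φ => ?_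
  by_cases hItop : I = ⊤
  · subst hItop
    exact ⟨φ ∘ₗ LinearMap.codRestrict ⊤ LinearMap.id fun _ => Submodule.mem_top, fun _ _ => rfl⟩
  by_cases hIbot : I = ⊥
  · subst hIbot
    refine ⟨0, fun y hy => ?_⟩
    obtain rfl : y = 0 := (Submodule.mem_bot R).mp hy
    exact (map_zero φ).symm
  have hIx : I ≤ Ideal.span {x} := hx ▸ (le_maximalIdeal hItop).trans hm
  have hxs : x ∈ socle R := hx ▸ Ideal.mem_span_singleton_self x
  obtain ⟨z, hzI, hz0⟩ := Submodule.exists_mem_ne_zero_of_ne_bot hIbot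
  obtain ⟨a, rfl⟩ := Ideal.mem_span_singleton'.mp (hIx hzI)
  have ha : IsUnit a := by
    by_contra ha
    exact hz0 (mem_socle.mp hxs a ((mem_maximalIdeal a).mpr ha))
  have hxI : x ∈ I := (I.unit_mul_mem_iff_mem ha).mp hzI
  have hφx : φ ⟨x, hxI⟩ ∈ socle R := mem_socle.mpr fun t ht => by
    rw [← smul_eq_mul, ← map_smul]
    convert map_zero φ
    exact Subtype.ext (mem_socle.mp hxs t ht)
  obtain ⟨c, hc⟩ := Ideal.mem_span_singleton'.mp (hx ▸ hφx)
  refine ⟨c • LinearMap.id, fun y hy => ?_⟩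
  obtain ⟨d, rfl⟩ := Ideal.mem_span_singleton'.mp (hIx hy)
  have : (⟨d * x, hy⟩ : I) = d • ⟨x, hxI⟩ := rfl
  rw [this, map_smul, ← hc]
  simp only [LinearMap.smul_apply, LinearMap.id_apply, smul_eq_mul]
  ring

end LocalRing

section ArtinianLocalRing

variable {R : Type u} [CommRing R] [IsLocalRing R] [IsArtinianRing R]

lemma exists_ne_zero_forall_maximalIdeal_smul_eq_zero (N : Type u) [AddCommGroup N] [Module R N]
    [Nontrivial N] : ∃ z : N, z ≠ 0 ∧ ∀ t ∈ maximalIdeal R, t • z = 0 := by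
  obtain ⟨P, hP⟩ := associatedPrimes.nonempty R N
  obtain ⟨hprime, z, rfl⟩ := isAssociatedPrime_iff.mp hP
  have hmax : (⊥ : Submodule R N).colon {z} = maximalIdeal R :=
    eq_maximalIdeal (IsArtinianRing.isMaximal_of_isPrime _)
  refine ⟨z, ?_, fun t ht => ?_⟩
  · rintro rfl
    exact hprime.ne_top (by simp)
  · rw [← hmax, Submodule.mem_colon_singleton] at ht
    simpa using ht

lemma exists_mem_socle_ne_zero {I : Ideal R} (hI : I ≠ ⊥) : ∃ z ∈ I, z ≠ 0 ∧ z ∈ socle R := by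
  have := Submodule.nontrivial_iff_ne_bot.mpr hI
  obtain ⟨⟨z, hzI⟩, hz0, hz⟩ := exists_ne_zero_forall_maximalIdeal_smul_eq_zero (R := R) I
  refine ⟨z, hzI, fun h => hz0 (Subtype.ext h), mem_socle.mpr fun t ht => ?_⟩
  simpa using congrArg Subtype.val (hz t ht)

lemma maximalIdeal_sq_eq_bot_of_socle_le_span {s : R} (hs : s ∈ socle R)
    (hs2 : s ∉ maximalIdeal R ^ 2) (hle : socle R ≤ Ideal.span {s}) : maximalIdeal R ^ 2 = ⊥ := by
  by_contra hne
  obtain ⟨z, hz2, hz0, hz⟩ := exists_mem_socle_ne_zero hne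
  obtain ⟨a, rfl⟩ := Ideal.mem_span_singleton'.mp (hle hz)
  have ha : IsUnit a := by
    by_contra ha
    exact hz0 (mem_socle.mp hs a ((mem_maximalIdeal a).mpr ha))
  exact hs2 ((Ideal.unit_mul_mem_iff_mem _ ha).mp hz2)

lemma injective_self_of_isReflexive_residueField [IsReflexive R (ResidueField R)] {s : R}
    (hs : s ∈ socle R) (hs2 : s ∉ maximalIdeal R ^ 2) : Module.Injective R R := by
  have hs0 : s ≠ 0 := by
    rintro rfl
    exact hs2 (zero_mem _)
  have hle := socle_le_span_of_isReflexive_residueField hs hs0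
  have hm2 := maximalIdeal_sq_eq_bot_of_socle_le_span hs hs2 hle
  have hm : maximalIdeal R ≤ socle R := fun t ht => mem_socle.mpr fun u hu => by
    have : u * t ∈ maximalIdeal R ^ 2 := sq (maximalIdeal R) ▸ Ideal.mul_mem_mul hu ht
    rwa [hm2, Ideal.mem_bot] at this
  exact injective_self_of_maximalIdeal_le_socle hm
    (le_antisymm hle (Ideal.span_le.mpr (Set.singleton_subset_iff.mpr hs)))

lemma exists_smul_eq_zero_notMem_smul_top_of_not_surjective (N : Type u) [AddCommGroup N]
    [Module R N] [Module.Finite R N] [IsReflexive R N] [Nontrivial N] {s : R} (hs : s ∈ socle R)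
    (hs2 : s ∉ maximalIdeal R ^ 2) (hN : ∀ f : Dual R N, ¬ Function.Surjective f) :
    ∃ x : N, (∀ t ∈ maximalIdeal R, t • x = 0) ∧ x ∉ maximalIdeal R • (⊤ : Submodule R N) := by
  have hrange (f : Dual R N) (x : N) : f x ∈ maximalIdeal R :=
    le_maximalIdeal (fun h => hN f (LinearMap.range_eq_top.mp h)) (LinearMap.mem_range_self f x)
  have := nontrivial_dual_of_isReflexive (R := R) N
  obtain ⟨f, -, hf⟩ :=
    SetLike.exists_of_lt (lt_top_iff_ne_top.mpr (maximalIdeal_smul_top_ne_top (R := R) (Dual R N)))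
  obtain ⟨g, hg⟩ := exists_residueField_functional_eq_one hf
  let Λ := residueFieldToSpanSingleton s (mem_socle.mp hs) ∘ₗ g
  refine ⟨(evalEquiv R N).symm Λ, fun t ht => ?_, fun hmem => hs2 ?_⟩
  · rw [← map_smul, LinearEquiv.map_eq_zero_iff]
    ext φ
    rw [LinearMap.smul_apply, LinearMap.comp_apply, ← map_smul, smul_residueField_eq_zero ht,
      map_zero, LinearMap.zero_apply]
  · have hle : maximalIdeal R • ⊤ ≤ Submodule.comap f (maximalIdeal R ^ 2) :=
      Submodule.smul_le.mpr fun r hr x _ => by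
        rw [Submodule.mem_comap, map_smul, smul_eq_mul, sq]
        exact Ideal.mul_mem_mul hr (hrange f x)
    simpa [Λ, hg] using hle hmem

end ArtinianLocalRing

end IsLocalRing

theorem stmt5 (R : Type u) [CommRing R] [IsArtinianRing R] [IsLocalRing R]
    (hsoc : ¬ Submodule.torsionBySet R R (maximalIdeal R : Set R) ≤ (maximalIdeal R) ^ 2)
    (hGor : ¬ Module.Injective R R)
    (M : Type u) [AddCommGroup M] [Module R M] [Module.Finite R M]
    (hrefl : Module.IsReflexive R M) :
    Module.Free R M := by
  obtain ⟨s, hs, hs2⟩ := SetLike.not_le_iff_exists.mp hsoc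
  have hk : ¬ IsReflexive R (ResidueField R) := fun _ =>
    hGor (injective_self_of_isReflexive_residueField hs hs2)
  refine free_of_forall_exists_surjective_dual (fun N _ _ _ _ _ => ?_) M
  by_contra! hN
  obtain ⟨x, hx, hx'⟩ := exists_smul_eq_zero_notMem_smul_top_of_not_surjective N hs hs2 hN
  exact hk (isReflexive_residueField_of_smul_eq_zero_of_notMem_smul_top hx hx')
end

section
/- Let k be a field, let e ≥ 2 and n ≥ 2 be integers, let S = k[x₁,…,x_e] with n = (x₁,…,x_e), and let R = S/nⁿ with maximal ideal m = n/nⁿ. Let E = Hom_k(R,k), regarded as an R-module via (r·f)(s) = f(rs); this is the injective envelope of k over R. Then m·Hom_R(E,R) = 0 and dim_k Hom_R(E,R) = ( binomial(e+n-2, n-1) )². -/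
set_option synthInstance.maxHeartbeats 1000000
set_option maxHeartbeats 1000000

noncomputable section

open MvPolynomial

/-- The module structure on `E = Hom_k(A, k)` for a commutative `k`-algebra `A`,
given by `(r · f)(s) = f (r * s)`. -/
def dualModule (k A : Type) [CommSemiring k] [CommRing A] [Algebra k A] :
    Module A (A →ₗ[k] k) where
  smul r f := f.comp (LinearMap.mulLeft k r)
  one_smul f := LinearMap.ext fun x => show f (1 * x) = f x by rw [one_mul]
  mul_smul r s f := LinearMap.ext fun x =>
    show f (r * s * x) = f (s * (r * x)) by rw [mul_comm r s, mul_assoc]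
  smul_zero r := rfl
  smul_add r f g := rfl
  add_smul r s f := LinearMap.ext fun x =>
    show f ((r + s) * x) = f (r * x) + f (s * x) by rw [add_mul, map_add]
  zero_smul f := LinearMap.ext fun x =>
    show f (0 * x) = 0 by rw [zero_mul, map_zero]

variable (k : Type) [Field k] (e n : ℕ)

/-- The irrelevant maximal ideal `n = (x₁, …, x_e)` of `S = k[x₁, …, x_e]`. -/
def nIdeal : Ideal (MvPolynomial (Fin e) k) := Ideal.span (Set.range X)

/-- The artinian local ring `R = S/nⁿ`. -/
abbrev Rq : Type := MvPolynomial (Fin e) k ⧸ (nIdeal k e ^ n)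

/-- `E = Hom_k(R, k)`, the `k`-linear dual of `R`, an `R`-module via `(r·f)(s) = f (rs)`;
it is the injective envelope of `k` over `R`. -/
abbrev Edual : Type := Rq k e n →ₗ[k] k

instance : Module (Rq k e n) (Edual k e n) := dualModule k (Rq k e n)

/-!
Write `κ_d ∈ E` for the functional reading off the coefficient of `x^d` (`degree d < n`); then
`x_j • κ_(d + single j 1) = κ_d`, and `x_j • κ_d = 0` when `d_j = 0`. An `R`-linear `φ : E → R` is
determined by its matrix `c(b, u)`, the coefficient of `x^u` in `φ κ_b`, and `R`-linearity
lets one move a variable between `b` and `u` without changing `c(b, u)`. With two distinct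
variables this forces `c(b, u) = 0` unless `b` and `u` both have degree `n - 1`: so `φ` kills
`m E`, and `φ` is an arbitrary matrix indexed by pairs of the `binomial(e+n-2, n-1)` monomials
of degree `n - 1`, each of which is realised because `m` kills the monomials of top degree.
-/

open Finsupp

namespace TruncatedPolynomial

variable {k e n}

theorem mem_nIdeal_pow_iff {m : ℕ} {p : MvPolynomial (Fin e) k} :
    p ∈ nIdeal k e ^ m ↔ ∀ d : Fin e →₀ ℕ, degree d < m → coeff d p = 0 :=
  mem_pow_idealOfVars_iff' m p

theorem eq_zero_or_eq_add_single {σ : Type*} (d : σ →₀ ℕ) (j : σ) :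
    d j = 0 ∨ ∃ d', d = d' + single j 1 := by
  refine or_iff_not_imp_left.mpr fun hj => ⟨d - single j 1, ?_⟩
  rw [tsub_add_cancel_of_le (single_le_iff.mpr (Nat.one_le_iff_ne_zero.mpr hj))]

theorem degree_add_single {σ : Type*} (d : σ →₀ ℕ) (j : σ) :
    degree (d + single j 1) = degree d + 1 := by
  rw [map_add, degree_single]

instance : Fintype {d : Fin e →₀ ℕ // degree d < n} :=
  have : Finite {d : Fin e →₀ ℕ // degree d < n} := (finite_of_degree_lt n).to_subtype
  Fintype.ofFinite _

variable (k n) in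
/-- Junk value `0` when `degree d ≥ n`, where the coefficient of `x^d` is not defined on `R`. -/
def coeffQ (d : Fin e →₀ ℕ) : Rq k e n →ₗ[k] k :=
  if h : degree d < n then
    ((nIdeal k e ^ n).restrictScalars k).liftQ (lcoeff k d)
        (fun _ hp => mem_nIdeal_pow_iff.mp hp d h) ∘ₗ
      (Submodule.Quotient.restrictScalarsEquiv k (nIdeal k e ^ n)).symm.toLinearMap
  else 0

theorem coeffQ_mk {d : Fin e →₀ ℕ} (hd : degree d < n) (p : MvPolynomial (Fin e) k) :
    coeffQ k n d (Ideal.Quotient.mk (nIdeal k e ^ n) p) = coeff d p := by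
  rw [coeffQ, dif_pos hd]
  rfl

theorem coeffQ_X_mul_add_single {d : Fin e →₀ ℕ} {j : Fin e} (hd : degree (d + single j 1) < n)
    (r : Rq k e n) :
    coeffQ k n (d + single j 1) (Ideal.Quotient.mk _ (X j) * r) = coeffQ k n d r := by
  obtain ⟨p, rfl⟩ := Ideal.Quotient.mk_surjective r
  rw [← map_mul, coeffQ_mk hd, coeffQ_mk (by rw [degree_add_single] at hd; omega), add_comm,
    coeff_X_mul]

theorem coeffQ_X_mul_of_eq_zero {d : Fin e →₀ ℕ} {j : Fin e} (hd : d j = 0) (r : Rq k e n) :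
    coeffQ k n d (Ideal.Quotient.mk _ (X j) * r) = 0 := by
  obtain ⟨p, rfl⟩ := Ideal.Quotient.mk_surjective r
  by_cases hdn : degree d < n
  · rw [← map_mul, coeffQ_mk hdn, coeff_X_mul', if_neg (by simpa using hd)]
  · simp [coeffQ, hdn]

variable (k e n) in
def coeffs : Rq k e n →ₗ[k] ({d : Fin e →₀ ℕ // degree d < n} → k) :=
  LinearMap.pi fun d => coeffQ k n d.1

theorem coeffs_injective : Function.Injective (coeffs k e n) := by
  refine (injective_iff_map_eq_zero _).mpr fun r hr => ?_
  obtain ⟨p, rfl⟩ := Ideal.Quotient.mk_surjective r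
  refine Ideal.Quotient.eq_zero_iff_mem.mpr (mem_nIdeal_pow_iff.mpr fun d hd => ?_)
  rw [← coeffQ_mk hd]
  exact congrFun hr ⟨d, hd⟩

theorem coeffs_surjective : Function.Surjective (coeffs k e n) := by
  classical
  intro c
  refine ⟨Ideal.Quotient.mk _ (∑ d, monomial d.1 (c d)), funext fun u => ?_⟩
  simp [coeffs, coeffQ_mk u.2, coeff_monomial, Subtype.val_inj]

theorem ext_coeffQ {r s : Rq k e n}
    (h : ∀ d : Fin e →₀ ℕ, degree d < n → coeffQ k n d r = coeffQ k n d s) : r = s :=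
  coeffs_injective (funext fun d => h d.1 d.2)

variable (k e n) in
def monomialBasis : Module.Basis {d : Fin e →₀ ℕ // degree d < n} k (Rq k e n) :=
  .ofEquivFun (.ofBijective (coeffs k e n) ⟨coeffs_injective, coeffs_surjective⟩)

theorem monomialBasis_coord (d : {d : Fin e →₀ ℕ // degree d < n}) :
    (monomialBasis k e n).coord d = coeffQ k n d.1 :=
  LinearMap.ext fun r => by
    rw [Module.Basis.coord_apply, monomialBasis, Module.Basis.ofEquivFun_repr_apply]
    rfl

instance : IsScalarTower k (Rq k e n) (Edual k e n) where
  smul_assoc c r f := LinearMap.ext fun s => by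
    change f ((c • r) * s) = c • f (r * s)
    rw [smul_mul_assoc, map_smul]

theorem X_smul_coeffQ_add_single {d : Fin e →₀ ℕ} {j : Fin e}
    (hd : degree (d + single j 1) < n) :
    Ideal.Quotient.mk (nIdeal k e ^ n) (X j) • coeffQ k n (d + single j 1) = coeffQ k n d :=
  LinearMap.ext (coeffQ_X_mul_add_single hd)

theorem X_smul_coeffQ_of_eq_zero {d : Fin e →₀ ℕ} {j : Fin e} (hd : d j = 0) :
    Ideal.Quotient.mk (nIdeal k e ^ n) (X j) • coeffQ k n d = 0 :=
  LinearMap.ext (coeffQ_X_mul_of_eq_zero hd)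

section

variable (φ : Edual k e n →ₗ[Rq k e n] Rq k e n)

def homCoeff (b u : Fin e →₀ ℕ) : k := coeffQ k n u (φ (coeffQ k n b))

@[simp]
theorem homCoeff_zero (b u : Fin e →₀ ℕ) :
    homCoeff (0 : Edual k e n →ₗ[Rq k e n] Rq k e n) b u = 0 := by
  rw [homCoeff, LinearMap.zero_apply, map_zero]

theorem homCoeff_add_single_right {b u : Fin e →₀ ℕ} {j : Fin e}
    (hb : degree (b + single j 1) < n) (hu : degree (u + single j 1) < n) :
    homCoeff φ b (u + single j 1) = homCoeff φ (b + single j 1) u := by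
  rw [homCoeff, ← X_smul_coeffQ_add_single hb, map_smul, smul_eq_mul,
    coeffQ_X_mul_add_single hu, homCoeff]

theorem homCoeff_eq_zero_of_right {b u : Fin e →₀ ℕ} {j : Fin e}
    (hb : degree (b + single j 1) < n) (hu : u j = 0) : homCoeff φ b u = 0 := by
  rw [homCoeff, ← X_smul_coeffQ_add_single hb, map_smul, smul_eq_mul,
    coeffQ_X_mul_of_eq_zero hu]

theorem homCoeff_eq_zero_of_left {b u : Fin e →₀ ℕ} {j : Fin e}
    (hb : b j = 0) (hu : degree (u + single j 1) < n) : homCoeff φ b u = 0 := by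
  rw [homCoeff, ← coeffQ_X_mul_add_single hu, ← smul_eq_mul, ← map_smul,
    X_smul_coeffQ_of_eq_zero hb, map_zero, map_zero]

/-- While `u` has room, a factor `x_i` can be moved from `b` to `u`, and while `b` has room a
factor `x_j` can be moved back; neither move changes `homCoeff`, and each lowers `b i + u j`,
so eventually `b i = 0` or `u j = 0` blocks a move, and then `homCoeff` vanishes. -/
theorem homCoeff_eq_zero_of_ne {i j : Fin e} (hij : i ≠ j) {b u : Fin e →₀ ℕ}
    (hb : degree b < n) (hu : degree u < n) (h : degree b + 1 < n ∨ degree u + 1 < n) :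
    homCoeff φ b u = 0 := by
  by_cases hu' : degree u + 1 < n
  · obtain hbi | ⟨b, rfl⟩ := eq_zero_or_eq_add_single b i
    · exact homCoeff_eq_zero_of_left φ hbi (by rwa [degree_add_single])
    · rw [degree_add_single] at hb
      rw [← homCoeff_add_single_right φ (by rwa [degree_add_single])
        (by rwa [degree_add_single])]
      exact homCoeff_eq_zero_of_ne hij (by omega) (by rwa [degree_add_single])
        (by omega)
  · obtain huj | ⟨u, rfl⟩ := eq_zero_or_eq_add_single u j
    · exact homCoeff_eq_zero_of_right φ (j := j) (by rw [degree_add_single]; omega) huj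
    · rw [degree_add_single] at hu hu' h
      rw [homCoeff_add_single_right φ (by rw [degree_add_single]; omega)
        (by rwa [degree_add_single])]
      exact homCoeff_eq_zero_of_ne hij (by rw [degree_add_single]; omega) (by omega)
        (by omega)
termination_by b i + u j
decreasing_by
  all_goals subst_vars; simp [hij, hij.symm]

theorem homCoeff_eq_zero (he : 2 ≤ e) {b u : Fin e →₀ ℕ} (hb : degree b < n) (hu : degree u < n)
    (h : degree b + 1 < n ∨ degree u + 1 < n) : homCoeff φ b u = 0 :=
  homCoeff_eq_zero_of_ne φ (i := ⟨0, by omega⟩) (j := ⟨1, by omega⟩) (by simp) hb hu h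

theorem coeffQ_apply_eq_sum (f : Edual k e n) (u : Fin e →₀ ℕ) :
    coeffQ k n u (φ f) = ∑ b, f (monomialBasis k e n b) * homCoeff φ b.1 u := by
  conv_lhs => rw [← (monomialBasis k e n).sum_dual_apply_smul_coord f]
  simp [map_sum, LinearMap.map_smul_of_tower, monomialBasis_coord, homCoeff]

end

theorem hom_ext_homCoeff {φ ψ : Edual k e n →ₗ[Rq k e n] Rq k e n}
    (h : ∀ b u, degree b < n → degree u < n → homCoeff φ b u = homCoeff ψ b u) : φ = ψ :=
  LinearMap.ext fun f => ext_coeffQ fun u hu => by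
    simp only [coeffQ_apply_eq_sum]
    exact Finset.sum_congr rfl fun b _ => by rw [h b.1 u b.2 hu]

theorem X_smul_hom_eq_zero (he : 2 ≤ e) (j : Fin e) (φ : Edual k e n →ₗ[Rq k e n] Rq k e n) :
    Ideal.Quotient.mk (nIdeal k e ^ n) (X j) • φ = 0 := by
  refine hom_ext_homCoeff fun b u hb hu => ?_
  simp only [homCoeff, LinearMap.smul_apply, LinearMap.zero_apply, map_zero, smul_eq_mul]
  obtain huj | ⟨u, rfl⟩ := eq_zero_or_eq_add_single u j
  · exact coeffQ_X_mul_of_eq_zero huj _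
  · rw [coeffQ_X_mul_add_single hu]
    rw [degree_add_single] at hu
    exact homCoeff_eq_zero φ he hb (by omega) (Or.inr hu)

theorem map_nIdeal_le_annihilator (he : 2 ≤ e) :
    (nIdeal k e).map (Ideal.Quotient.mk (nIdeal k e ^ n)) ≤
      Module.annihilator (Rq k e n) (Edual k e n →ₗ[Rq k e n] Rq k e n) := by
  change Ideal.map _ (Ideal.span (Set.range X)) ≤ _
  rw [Ideal.map_span, Ideal.span_le]
  rintro _ ⟨_, ⟨j, rfl⟩, rfl⟩
  exact Module.mem_annihilator.mpr (X_smul_hom_eq_zero he j)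

variable (e n) in
abbrev TopDegree : Type := {d : Fin e →₀ ℕ // degree d = n - 1}

instance : Fintype (TopDegree e n) :=
  have : Finite (TopDegree e n) := (finite_of_degree_eq (n - 1)).to_subtype
  Fintype.ofFinite _

theorem card_degree_eq (m : ℕ) :
    Nat.card {d : Fin e →₀ ℕ // degree d = m} = (e + m - 1).choose m := by
  rw [show Nat.card {d : Fin e →₀ ℕ // degree d = m} = Nat.card (Sym (Fin e) m) from
      Nat.card_congr (Sym.equivNatSum (Fin e) m).symm,
    Nat.card_eq_fintype_card, Sym.card_sym_eq_choose, Fintype.card_fin]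

theorem mul_mk_monomial_of_degree_eq (hn : 0 < n) {d : Fin e →₀ ℕ} (hd : degree d = n - 1)
    (r : Rq k e n) :
    r * Ideal.Quotient.mk _ (monomial d 1) =
      coeffQ k n 0 r • Ideal.Quotient.mk (nIdeal k e ^ n) (monomial d 1) := by
  obtain ⟨p, rfl⟩ := Ideal.Quotient.mk_surjective r
  have hp : p - C (coeff 0 p) ∈ nIdeal k e := by
    rw [← pow_one (nIdeal k e), mem_nIdeal_pow_iff]
    intro d' hd'
    simp [(degree_eq_zero_iff d').mp (by omega)]
  have hm : monomial d (1 : k) ∈ nIdeal k e ^ (n - 1) :=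
    mem_nIdeal_pow_iff.mpr fun d' hd' => by
      rw [coeff_monomial, if_neg (by rintro rfl; omega)]
  have hpm := Ideal.mul_mem_mul hp hm
  rw [← pow_succ', Nat.sub_add_cancel hn] at hpm
  rw [coeffQ_mk (by simpa using hn), ← map_mul, ← Ideal.Quotient.mkₐ_eq_mk k, ← map_smul,
    smul_eq_C_mul, Ideal.Quotient.mkₐ_eq_mk, Ideal.Quotient.eq, ← sub_mul]
  exact hpm

def socleHom (hn : 0 < n) (b u : TopDegree e n) : Edual k e n →ₗ[Rq k e n] Rq k e n where
  toFun f := f (Ideal.Quotient.mk _ (monomial b.1 1)) • Ideal.Quotient.mk _ (monomial u.1 1)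
  map_add' f g := by rw [LinearMap.add_apply, add_smul]
  map_smul' r f := by
    change f (r * _) • _ = r • (f _ • _)
    rw [mul_mk_monomial_of_degree_eq hn b.2, map_smul, smul_eq_mul r, mul_smul_comm,
      mul_mk_monomial_of_degree_eq hn u.2, smul_smul, smul_eq_mul, mul_comm]

variable (k e n) in
def homCoeffs :
    (Edual k e n →ₗ[Rq k e n] Rq k e n) →ₗ[k] (TopDegree e n × TopDegree e n → k) where
  toFun φ p := homCoeff φ p.1 p.2
  map_add' φ ψ := by funext p; simp [homCoeff]
  map_smul' c φ := by funext p; simp [homCoeff]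

theorem homCoeffs_socleHom (hn : 0 < n) (p : TopDegree e n × TopDegree e n) :
    homCoeffs k e n (socleHom hn p.1 p.2) = Pi.single p 1 := by
  funext q
  have hlt (d : TopDegree e n) : degree d.1 < n := by rw [d.2]; omega
  simp only [homCoeffs, homCoeff, socleHom, LinearMap.coe_mk, AddHom.coe_mk, coeffQ_mk (hlt _),
    coeff_monomial, ite_smul, one_smul, zero_smul, Pi.single_apply, Prod.ext_iff, Subtype.ext_iff]
  split_ifs <;> simp_all [coeffQ_mk (hlt _), coeff_monomial, eq_comm]

theorem homCoeffs_injective (he : 2 ≤ e) : Function.Injective (homCoeffs k e n) := by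
  refine (injective_iff_map_eq_zero _).mpr fun φ hφ => hom_ext_homCoeff fun b u hb hu => ?_
  rw [homCoeff_zero]
  by_cases htop : degree b = n - 1 ∧ degree u = n - 1
  · exact congrFun hφ (⟨b, htop.1⟩, ⟨u, htop.2⟩)
  · exact homCoeff_eq_zero φ he hb hu (by omega)

theorem homCoeffs_surjective (hn : 0 < n) : Function.Surjective (homCoeffs k e n) := fun M =>
  ⟨∑ p, M p • socleHom hn p.1 p.2, by
    simp [map_sum, homCoeffs_socleHom, ← Pi.single_smul', Finset.univ_sum_single]⟩

theorem finrank_hom (he : 2 ≤ e) (hn : 0 < n) :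
    Module.finrank k (Edual k e n →ₗ[Rq k e n] Rq k e n) = Fintype.card (TopDegree e n) ^ 2 := by
  rw [(LinearEquiv.ofBijective _ ⟨homCoeffs_injective he, homCoeffs_surjective hn⟩).finrank_eq,
    Module.finrank_fintype_fun_eq_card, Fintype.card_prod, sq]

end TruncatedPolynomial

theorem stmt6 (he : 2 ≤ e) (hn : 2 ≤ n) :
    (∀ r ∈ (nIdeal k e).map (Ideal.Quotient.mk (nIdeal k e ^ n)),
      ∀ φ : Edual k e n →ₗ[Rq k e n] Rq k e n, r • φ = 0) ∧
    Module.finrank k (Edual k e n →ₗ[Rq k e n] Rq k e n) =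
      (Nat.choose (e + n - 2) (n - 1)) ^ 2 := by
  refine ⟨fun r hr => Module.mem_annihilator.mp
    (TruncatedPolynomial.map_nIdeal_le_annihilator he hr), ?_⟩
  rw [TruncatedPolynomial.finrank_hom he (by omega), Fintype.card_eq_nat_card,
    TruncatedPolynomial.card_degree_eq, show e + (n - 1) - 1 = e + n - 2 by omega]
end
end

section
/- Let (R,m,k) be an artinian local ring with m^{n+1} = 0 and mⁿ ≠ 0 for some integer n ≥ 1 (i.e., of Loewy length n+1), and let E be an injective envelope of k over R. Then E ≅ R as R-modules (equivalently, R is Gorenstein) if and only if mⁿ·Hom_R(E,R) ≠ 0. -/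
open IsLocalRing

universe u

/-- `(E, ι)` is an injective envelope of the residue field `k` over `R`: `E` is injective,
`ι : k → E` is injective, and the image of `ι` is essential in `E`. -/
def IsInjectiveEnvelopeOfResidueField (R : Type u) [CommRing R] [IsLocalRing R]
    (E : Type u) [AddCommGroup E] [Module R E] (ι : ResidueField R →ₗ[R] E) : Prop :=
  Module.Injective R E ∧ Function.Injective ι ∧
    ∀ N : Submodule R E, N ≠ ⊥ → N ⊓ LinearMap.range ι ≠ ⊥


theorem stmt8 (R : Type u) [CommRing R] [IsArtinianRing R] [IsLocalRing R]
    (n : ℕ) (hn : 1 ≤ n)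
    (hpow : (maximalIdeal R) ^ (n + 1) = ⊥) (hpow' : (maximalIdeal R) ^ n ≠ ⊥)
    (E : Type u) [AddCommGroup E] [Module R E] (ι : ResidueField R →ₗ[R] E)
    (hE : IsInjectiveEnvelopeOfResidueField R E ι) :
    Nonempty (E ≃ₗ[R] R) ↔
      ¬ ∀ r ∈ (maximalIdeal R) ^ n, ∀ φ : E →ₗ[R] R, r • φ = 0 := by
  constructor
  · rintro ⟨e⟩ h
    obtain ⟨r, hr, hr0⟩ := Submodule.ne_bot_iff _ |>.mp hpow'
    have h1 := h r hr e.toLinearMap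
    apply hr0
    have h2 := congrArg (fun f : E →ₗ[R] R => f (e.symm 1)) h1
    simpa using h2
  · intro h
    push_neg at h
    obtain ⟨r, hr, φ, hφ⟩ := h
    obtain ⟨hinj, hιinj, hess⟩ := hE
    have hsurj : Function.Surjective φ := by
      rw [← LinearMap.range_eq_top]
      by_contra hne
      have hle : LinearMap.range φ ≤ maximalIdeal R := le_maximalIdeal hne
      apply hφ
      ext x
      have hx : φ x ∈ maximalIdeal R := hle ⟨x, rfl⟩
      have hmem : r * φ x ∈ (maximalIdeal R) ^ (n + 1) := by
        rw [pow_succ]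
        exact Ideal.mul_mem_mul hr hx
      rw [hpow] at hmem
      simpa using hmem
    have hι : LinearMap.range ι ≠ ⊥ := by
      intro hbot
      have h1 : ι 1 ∈ LinearMap.range ι := ⟨1, rfl⟩
      rw [hbot, Submodule.mem_bot] at h1
      exact one_ne_zero (hιinj (by simpa using h1))
    have hatom : ∀ N : Submodule R E, N ⊓ LinearMap.range ι ≠ ⊥ → LinearMap.range ι ≤ N := by
      intro N hN
      obtain ⟨y, hy, hy0⟩ := Submodule.ne_bot_iff _ |>.mp hN
      obtain ⟨c, rfl⟩ := hy.2
      have hc : c ≠ 0 := fun hcc => hy0 (by simp [hcc])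
      rintro _ ⟨c', rfl⟩
      obtain ⟨r', hr'⟩ := residue_surjective (R := R) (c' * c⁻¹)
      have hrc : r' • c = c' := by
        have : r' • c = residue R r' * c := rfl
        rw [this, hr', mul_assoc, inv_mul_cancel₀ hc, mul_one]
      rw [← hrc, map_smul]
      exact N.smul_mem r' hy.1
    obtain ⟨x₀, hx₀⟩ := hsurj 1
    have hx₀0 : x₀ ≠ 0 := by
      intro hxx
      rw [hxx, map_zero] at hx₀
      exact one_ne_zero hx₀.symm
    have hker : LinearMap.ker φ = ⊥ := by
      by_contra hK
      have hKι : LinearMap.range ι ≤ LinearMap.ker φ := hatom _ (hess _ hK)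
      set s : R →ₗ[R] E := LinearMap.toSpanSingleton R E x₀ with hs
      have hS : LinearMap.range s ≠ ⊥ := by
        intro hbot
        have : x₀ ∈ LinearMap.range s := ⟨1, by simp [hs]⟩
        rw [hbot, Submodule.mem_bot] at this
        exact hx₀0 this
      have hSι : LinearMap.range ι ≤ LinearMap.range s := hatom _ (hess _ hS)
      apply hι
      rw [eq_bot_iff]
      intro y hy
      obtain ⟨a, ha⟩ := hSι hy
      have hyk : φ y = 0 := hKι hy
      have : a = 0 := by
        have := congrArg φ ha
        rw [hyk] at this
        simpa [hs, hx₀] using this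
      rw [← ha, this] at *
      simp [hs]
    exact ⟨LinearEquiv.ofBijective φ ⟨LinearMap.ker_eq_bot.mp hker, hsurj⟩⟩
end

section
/- Let (R,m,k) be an artinian local ring and let E be an injective envelope of k over R. Then m·Hom_R(E,R) = 0 if and only if m·Hom_R(Hom_R(E,R),R) = 0; that is, m·E* = 0 if and only if m·E** = 0. -/
open IsLocalRing

universe u

theorem stmt9 (R : Type u) [CommRing R] [IsArtinianRing R] [IsLocalRing R]
    (E : Type u) [AddCommGroup E] [Module R E] (ι : ResidueField R →ₗ[R] E)
    (hE : IsInjectiveEnvelopeOfResidueField R E ι) :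
    (∀ r ∈ maximalIdeal R, ∀ φ : E →ₗ[R] R, r • φ = 0) ↔
      (∀ r ∈ maximalIdeal R, ∀ ψ : (E →ₗ[R] R) →ₗ[R] R, r • ψ = 0) := by
  constructor
  · intro h r hr ψ
    ext φ
    simp only [LinearMap.smul_apply, LinearMap.zero_apply, smul_eq_mul]
    rw [← smul_eq_mul, ← map_smul, h r hr φ, map_zero]
  · intro h r hr φ
    ext e
    have := congrFun (congrArg DFunLike.coe (h r hr (Module.Dual.eval R E e))) φ
    simpa using this
end

section
/- Let (R,m,k) be an artinian local ring and let E be an injective envelope of k over R with embedding ι : k → E. Then m·(E/ι(k)) = 0 if and only if m² = 0. -/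
open IsLocalRing

universe u

/-!
Faithfulness of `E` gives the forward direction: if `m` kills `E/ι(k)`, then `m E ⊆ ι(k)` and
`m ι(k) = 0`, so `m²` annihilates `E` and hence vanishes. For faithfulness, a nonzero ideal of
the artinian ring `R` contains a nonzero `x` with `m x = 0`; then `k ≅ R x ↪ R`, and extending
`ι` along this embedding to `h : R → E` gives `x • h 1 = ι 1 ≠ 0`.

Conversely, if `m² = 0`, each `r • e` with `r ∈ m` is killed by `m`, and an element of `E` killed
by `m` lies in `ι(k)`: the cyclic module it spans meets `ι(k)` in a nonzero multiple `a • x`,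
and `a` must be a unit.
-/

section Socle

variable {R M : Type*} [CommRing R] [AddCommGroup M] [Module R M]

theorem Submodule.exists_ne_bot_le_and_smul_eq_bot_of_pow_smul_eq_bot {I : Ideal R}
    {N : Submodule R M} (hN : N ≠ ⊥) {n : ℕ} (hn : I ^ n • N = ⊥) :
    ∃ K ≤ N, K ≠ ⊥ ∧ I • K = ⊥ := by
  induction n with
  | zero => exact absurd (by simpa using hn) hN
  | succ n ih =>
    by_cases hK : I ^ n • N = ⊥
    · exact ih hK
    · exact ⟨I ^ n • N, Submodule.smul_le_right, hK, by rwa [← Submodule.mul_smul, ← pow_succ']⟩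

theorem IsLocalRing.exists_ne_zero_mem_and_maximalIdeal_smul_eq_zero [IsArtinianRing R]
    [IsLocalRing R] {N : Submodule R M} (hN : N ≠ ⊥) :
    ∃ x ∈ N, x ≠ 0 ∧ ∀ r ∈ maximalIdeal R, r • x = 0 := by
  obtain ⟨n, hn⟩ := (isArtinianRing_iff_isNilpotent_maximalIdeal R).mp inferInstance
  obtain ⟨K, hKN, hK, hmK⟩ :=
    Submodule.exists_ne_bot_le_and_smul_eq_bot_of_pow_smul_eq_bot hN (n := n)
      (by rw [hn, Submodule.zero_eq_bot, Submodule.bot_smul])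
  obtain ⟨x, hxK, hx⟩ := Submodule.exists_mem_ne_zero_of_ne_bot hK
  refine ⟨x, hKN hxK, hx, fun r hr => ?_⟩
  have hrx := Submodule.smul_mem_smul hr hxK
  rwa [hmK, Submodule.mem_bot] at hrx

end Socle

section ResidueField

variable {R M : Type*} [CommRing R] [IsLocalRing R] [AddCommGroup M] [Module R M]

theorem IsLocalRing.exists_injective_residueField_linearMap {x : M} (hx : x ≠ 0)
    (hmx : ∀ r ∈ maximalIdeal R, r • x = 0) :
    ∃ f : ResidueField R →ₗ[R] M, Function.Injective f ∧ f 1 = x := by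
  let f : ResidueField R →ₗ[R] M :=
    (maximalIdeal R).liftQ (LinearMap.toSpanSingleton R M x) hmx
  have hf : ∀ a : R, f (residue R a) = a • x := fun _ => rfl
  refine ⟨f, ?_, by simpa using hf 1⟩
  rw [← LinearMap.ker_eq_bot, eq_bot_iff]
  intro y hy
  obtain ⟨a, rfl⟩ := residue_surjective y
  rw [LinearMap.mem_ker, hf] at hy
  rw [Submodule.mem_bot, residue_eq_zero_iff]
  by_contra ha
  exact hx (((notMem_maximalIdeal.mp ha).smul_eq_zero).mp hy)

theorem IsLocalRing.mem_of_maximalIdeal_smul_eq_zero {S : Submodule R M}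
    (hS : ∀ N : Submodule R M, N ≠ ⊥ → N ⊓ S ≠ ⊥) {x : M}
    (hmx : ∀ r ∈ maximalIdeal R, r • x = 0) : x ∈ S := by
  by_cases hx : x = 0
  · exact hx ▸ S.zero_mem
  obtain ⟨y, ⟨hyx, hyS⟩, hy⟩ :=
    Submodule.exists_mem_ne_zero_of_ne_bot
      (hS (R ∙ x) (by simpa [Submodule.span_singleton_eq_bot] using hx))
  obtain ⟨a, rfl⟩ := Submodule.mem_span_singleton.mp hyx
  have ha : IsUnit a := notMem_maximalIdeal.mp fun ha => hy (hmx a ha)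
  exact (S.smul_mem_iff_of_isUnit ha).mp hyS

end ResidueField

theorem Module.annihilator_eq_bot_of_injective_residueField {R E : Type u} [CommRing R]
    [IsArtinianRing R] [IsLocalRing R] [AddCommGroup E] [Module R E] [Module.Injective R E]
    {ι : ResidueField R →ₗ[R] E} (hι : Function.Injective ι) : Module.annihilator R E = ⊥ := by
  by_contra hann
  obtain ⟨x, hxE, hx, hmx⟩ := exists_ne_zero_mem_and_maximalIdeal_smul_eq_zero hann
  obtain ⟨f, hf, hf1⟩ := exists_injective_residueField_linearMap hx hmx
  obtain ⟨h, hh⟩ := Module.Injective.out f hf ι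
  have hx1 : x • h 1 = ι 1 := by rw [← map_smul, smul_eq_mul, mul_one, ← hf1, hh]
  rw [Module.mem_annihilator.mp hxE, eq_comm, map_eq_zero_iff ι hι] at hx1
  exact one_ne_zero hx1

theorem stmt10 (R : Type u) [CommRing R] [IsArtinianRing R] [IsLocalRing R]
    (E : Type u) [AddCommGroup E] [Module R E] (ι : ResidueField R →ₗ[R] E)
    (hE : IsInjectiveEnvelopeOfResidueField R E ι) :
    (∀ r ∈ maximalIdeal R, ∀ x : E ⧸ LinearMap.range ι, r • x = 0) ↔
      (maximalIdeal R) ^ 2 = ⊥ := by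
  obtain ⟨hinj, hι, hess⟩ := hE
  have hquot : (∀ r ∈ maximalIdeal R, ∀ x : E ⧸ LinearMap.range ι, r • x = 0) ↔
      ∀ r ∈ maximalIdeal R, ∀ e : E, r • e ∈ LinearMap.range ι := by
    simp only [Submodule.Quotient.forall, ← Submodule.Quotient.mk_smul,
      Submodule.Quotient.mk_eq_zero]
  rw [hquot]
  constructor
  · intro hm
    rw [eq_bot_iff, ← Module.annihilator_eq_bot_of_injective_residueField hι, pow_two,
      Ideal.mul_le]
    intro r hr s hs
    refine Module.mem_annihilator.mpr fun e => ?_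
    obtain ⟨y, hy⟩ := hm s hs e
    rw [mul_smul, ← hy, ← map_smul, Algebra.smul_def, ResidueField.algebraMap_eq,
      (residue_eq_zero_iff r).mpr hr, zero_mul, map_zero]
  · intro hm2 r hr e
    refine mem_of_maximalIdeal_smul_eq_zero hess fun s hs => ?_
    have hsr : s * r ∈ maximalIdeal R ^ 2 := pow_two (maximalIdeal R) ▸ Ideal.mul_mem_mul hs hr
    rw [hm2, Submodule.mem_bot] at hsr
    rw [← mul_smul, hsr, zero_smul]
end

section
/- Let (R,m,k) be an artinian local ring which is not injective as a module over itself (i.e., R is not Gorenstein), and let E be an injective envelope of k over R. Then m² = 0 if and only if R is nearly Gorenstein and m·Hom_R(E,R) = 0, where R is nearly Gorenstein means m ⊆ tr_R(E) := Σ_{f ∈ Hom_R(E,R)} Im(f). -/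
open IsLocalRing

universe u

/-!
If `m ^ 2 = 0`, every `r ∈ m` is killed by `m`, so `c ↦ c • r` is a map `k → R`; composed with
a functional `E → k` taking the value `1` it puts `r` into `tr(E)`. Such a functional exists as
soon as `E ≠ m E`: pick `0 ≠ x ∈ m` (there is one, since fields are self-injective); extending
`k ≅ R x ⊆ R` into `E` gives `e` with `x • e` a nonzero socle element, while `x` kills `m E`.
Every `f : E → R` lands in `m`, since otherwise `R` would be a retract of the injective module
`E`; hence `m • f = 0`. Conversely `m • E* = 0` gives `m * tr(E) = 0`, so `m ⊆ tr(E)` forces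
`m ^ 2 = 0`.
-/

section

variable {R : Type u} [CommRing R] {E : Type u} [AddCommGroup E] [Module R E]

theorem Module.Injective.of_retract [Module.Injective R E] (s : R →ₗ[R] E) (f : E →ₗ[R] R)
    (hfs : f ∘ₗ s = LinearMap.id) : Module.Injective R R where
  out X Y _ _ _ _ i hi g := by
    obtain ⟨h, hh⟩ := Module.Injective.out i hi (s ∘ₗ g)
    exact ⟨f ∘ₗ h, fun x => by simp [hh, ← LinearMap.comp_apply f s, hfs]⟩

theorem Ideal.exists_linearMap_quotient_apply_one {I : Ideal R} {r : R}
    (hr : ∀ s ∈ I, s * r = 0) : ∃ g : R ⧸ I →ₗ[R] R, g 1 = r :=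
  ⟨I.liftQ (LinearMap.toSpanSingleton R R r) fun s hs => hr s hs, one_smul R r⟩

theorem Ideal.exists_linearMap_quotient_eq_one_of_notMem_smul_top {I : Ideal R} [I.IsMaximal]
    {e : E} (he : e ∉ I • (⊤ : Submodule R E)) : ∃ μ : E →ₗ[R] R ⧸ I, μ e = 1 := by
  let _ := Ideal.Quotient.field I
  obtain ⟨φ, hφ⟩ := Module.Projective.exists_dual_eq_one (R ⧸ I)
    (x := Submodule.Quotient.mk (p := I • (⊤ : Submodule R E)) e)
    (by rwa [ne_eq, Submodule.Quotient.mk_eq_zero])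
  exact ⟨φ.restrictScalars R ∘ₗ (I • (⊤ : Submodule R E)).mkQ, hφ⟩

theorem Ideal.mul_eq_zero_of_sq_eq_bot {I : Ideal R} (hI : I ^ 2 = ⊥) {a b : R} (ha : a ∈ I)
    (hb : b ∈ I) : a * b = 0 := by
  simpa [← sq, hI] using Ideal.mul_mem_mul ha hb

theorem Ideal.mul_iSup_range_eq_bot {I : Ideal R}
    (h : ∀ a ∈ I, ∀ f : E →ₗ[R] R, a • f = 0) : I * ⨆ f : E →ₗ[R] R, LinearMap.range f = ⊥ := by
  rw [Ideal.mul_iSup, iSup_eq_bot]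
  intro f
  rw [eq_bot_iff, Ideal.mul_le]
  rintro a ha _ ⟨e, rfl⟩
  simpa using LinearMap.congr_fun (h a ha f) e

end

namespace IsLocalRing

variable {R : Type u} [CommRing R] [IsLocalRing R] {E : Type u} [AddCommGroup E] [Module R E]

theorem apply_mem_maximalIdeal_of_not_injective (hR : ¬ Module.Injective R R)
    [Module.Injective R E] (f : E →ₗ[R] R) (e : E) : f e ∈ maximalIdeal R := by
  by_contra he
  obtain ⟨u, hu⟩ := notMem_maximalIdeal.mp he
  refine hR (.of_retract (LinearMap.toSpanSingleton R E ((↑u⁻¹ : R) • e)) f ?_)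
  ext
  simp [← hu]

theorem maximalIdeal_ne_bot_of_not_injective (hR : ¬ Module.Injective R R) :
    maximalIdeal R ≠ ⊥ := by
  intro h
  let _ := ((isField_iff_maximalIdeal_eq).mpr h).toField
  exact hR (Module.injective_of_isSemisimpleRing R R)

theorem exists_smul_eq_of_injective [Module.Injective R E] {v : E}
    (hmv : ∀ s ∈ maximalIdeal R, s • v = 0) {x : R} (hx : x ≠ 0)
    (hmx : ∀ s ∈ maximalIdeal R, s * x = 0) : ∃ e : E, x • e = v := by
  obtain ⟨g, hg⟩ := Ideal.exists_linearMap_quotient_apply_one hmx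
  have hg_inj : Function.Injective g := by
    rw [← LinearMap.ker_eq_bot, eq_bot_iff]
    intro c hc
    obtain ⟨s, rfl⟩ := Ideal.Quotient.mk_surjective c
    have hsx : s * x = 0 := by
      rw [← hg, ← smul_eq_mul, ← map_smul, Algebra.smul_def, mul_one]
      exact hc
    rw [Submodule.mem_bot, Ideal.Quotient.eq_zero_iff_mem]
    by_contra hs
    exact hx ((notMem_maximalIdeal.mp hs).mul_right_eq_zero.mp hsx)
  obtain ⟨F, hF⟩ := Module.Injective.extension_property R E _ _ g hg_inj
    ((maximalIdeal R).liftQ (LinearMap.toSpanSingleton R E v) hmv)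
  refine ⟨F 1, ?_⟩
  rw [← map_smul, smul_eq_mul, mul_one, ← hg, ← LinearMap.comp_apply, hF]
  exact one_smul R v

theorem exists_notMem_maximalIdeal_smul_top (hR : ¬ Module.Injective R R)
    (hsq : maximalIdeal R ^ 2 = ⊥) [Module.Injective R E] {v : E} (hv : v ≠ 0)
    (hmv : ∀ s ∈ maximalIdeal R, s • v = 0) :
    ∃ e : E, e ∉ maximalIdeal R • (⊤ : Submodule R E) := by
  obtain ⟨x, hxm, hx0⟩ := (Submodule.ne_bot_iff _).mp (maximalIdeal_ne_bot_of_not_injective hR)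
  obtain ⟨e, he⟩ := exists_smul_eq_of_injective hmv hx0
    fun s hs => Ideal.mul_eq_zero_of_sq_eq_bot hsq hs hxm
  -- `x • e = v ≠ 0`, whereas `x` kills `m • E` because `m ^ 2 = 0`
  refine ⟨e, fun hmem => hv ?_⟩
  have : x • e ∈ (maximalIdeal R ^ 2) • (⊤ : Submodule R E) := by
    rw [sq, Submodule.mul_smul]
    exact Submodule.smul_mem_smul hxm hmem
  rwa [hsq, Submodule.bot_smul, Submodule.mem_bot, he] at this

end IsLocalRing

theorem stmt11_general (R : Type u) [CommRing R] [IsLocalRing R]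
    (hGor : ¬ Module.Injective R R)
    (E : Type u) [AddCommGroup E] [Module R E] (ι : ResidueField R →ₗ[R] E)
    (hE : IsInjectiveEnvelopeOfResidueField R E ι) :
    (maximalIdeal R) ^ 2 = ⊥ ↔
      (maximalIdeal R ≤ ⨆ f : E →ₗ[R] R, LinearMap.range f) ∧
        (∀ r ∈ maximalIdeal R, ∀ φ : E →ₗ[R] R, r • φ = 0) := by
  obtain ⟨_, hι, -⟩ := hE
  refine ⟨fun hsq => ⟨fun r hr => ?_, fun r hr φ => ?_⟩, fun ⟨htr, hann⟩ => ?_⟩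
  · have hsocle : ∀ s ∈ maximalIdeal R, s • ι 1 = 0 := fun s hs => by
      rw [← map_smul, Algebra.smul_def, mul_one, ResidueField.algebraMap_eq,
        (residue_eq_zero_iff s).mpr hs, map_zero]
    obtain ⟨e, he⟩ := exists_notMem_maximalIdeal_smul_top hGor hsq
      ((map_ne_zero_iff ι hι).mpr one_ne_zero) hsocle
    obtain ⟨μ, hμ⟩ := Ideal.exists_linearMap_quotient_eq_one_of_notMem_smul_top he
    obtain ⟨g, hg⟩ := Ideal.exists_linearMap_quotient_apply_one
      fun s hs => Ideal.mul_eq_zero_of_sq_eq_bot hsq hs hr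
    exact Submodule.mem_iSup_of_mem (g ∘ₗ μ) ⟨e, by rw [LinearMap.comp_apply, hμ, hg]⟩
  · ext e
    exact Ideal.mul_eq_zero_of_sq_eq_bot hsq hr
      (apply_mem_maximalIdeal_of_not_injective hGor φ e)
  · rw [eq_bot_iff, sq]
    exact (Ideal.mul_mono_right htr).trans (Ideal.mul_iSup_range_eq_bot hann).le

theorem stmt11 (R : Type u) [CommRing R] [IsArtinianRing R] [IsLocalRing R]
    (hGor : ¬ Module.Injective R R)
    (E : Type u) [AddCommGroup E] [Module R E] (ι : ResidueField R →ₗ[R] E)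
    (hE : IsInjectiveEnvelopeOfResidueField R E ι) :
    (maximalIdeal R) ^ 2 = ⊥ ↔
      (maximalIdeal R ≤ ⨆ f : E →ₗ[R] R, LinearMap.range f) ∧
        (∀ r ∈ maximalIdeal R, ∀ φ : E →ₗ[R] R, r • φ = 0) :=
  stmt11_general R hGor E ι hE
end

section
/- Let (S,n,k) be an artinian local ring which is injective as a module over itself (i.e., artinian Gorenstein), let I be a proper ideal of S, and set R = S/I with maximal ideal m = n/I. Let E be an injective envelope of k over R. If m·Hom_R(E,R) = 0, then n·(0 :_S I) ⊆ I. -/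
open IsLocalRing

universe u

/-- In an artinian local ring, every nonzero cyclic module contains a nonzero socle element. -/
lemma socle_exists_aux {S : Type u} [CommRing S] [IsArtinianRing S] [IsLocalRing S]
    (d : S) (hd : d ≠ 0) :
    ∃ c : S, c * d ≠ 0 ∧ ∀ a ∈ maximalIdeal S, a * (c * d) = 0 := by
  obtain ⟨N, hN⟩ : IsNilpotent (maximalIdeal S) := by
    rw [← IsLocalRing.jacobson_eq_maximalIdeal (⊥ : Ideal S) bot_ne_top]
    exact IsArtinianRing.isNilpotent_jacobson_bot
  have key : ∀ n : ℕ, ∀ d : S, d ≠ 0 → (∀ x ∈ (maximalIdeal S) ^ n, x * d = 0) →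
      ∃ c : S, c * d ≠ 0 ∧ ∀ a ∈ maximalIdeal S, a * (c * d) = 0 := by
    intro n
    induction n with
    | zero =>
      intro d hd h0
      exact absurd (by simpa using h0 1 (by simp)) hd
    | succ n ih =>
      intro d hd h0
      by_cases hc : ∀ a ∈ maximalIdeal S, a * d = 0
      · exact ⟨1, by simpa using hd, by simpa using hc⟩
      · push_neg at hc
        obtain ⟨a, ha, had⟩ := hc
        obtain ⟨c, hc1, hc2⟩ := ih (a * d) had (by
          intro x hx
          have hxa : x * a ∈ (maximalIdeal S) ^ (n + 1) := by
            rw [pow_succ]; exact Ideal.mul_mem_mul hx ha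
          calc x * (a * d) = (x * a) * d := by ring
          _ = 0 := h0 _ hxa)
        refine ⟨c * a, by rwa [mul_assoc], fun b hb => ?_⟩
        rw [mul_assoc]
        exact hc2 b hb
  refine key N d hd (fun x hx => ?_)
  rw [hN] at hx
  simp only [Ideal.zero_eq_bot, Ideal.mem_bot] at hx
  rw [hx, zero_mul]

/-- In a self-injective local ring, the socle is contained in any cyclic module
generated by a nonzero socle element. -/
lemma socle_span_aux {S : Type u} [CommRing S] [IsLocalRing S]
    (hGor : Module.Injective S S)
    (s₀ : S) (hs₀ : s₀ ≠ 0) (hns₀ : ∀ a ∈ maximalIdeal S, a * s₀ = 0)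
    (t : S) (hnt : ∀ a ∈ maximalIdeal S, a * t = 0) : ∃ c : S, t = c * s₀ := by
  set n : Ideal S := maximalIdeal S with hn
  have hq : ∀ s : S, (∀ a ∈ n, a * s = 0) →
      n ≤ LinearMap.ker (LinearMap.toSpanSingleton S S s) := by
    intro s hs a ha
    simp only [LinearMap.mem_ker, LinearMap.toSpanSingleton_apply, smul_eq_mul]
    exact hs a ha
  set g₁ : (S ⧸ (n : Submodule S S)) →ₗ[S] S :=
    Submodule.liftQ n (LinearMap.toSpanSingleton S S s₀) (hq s₀ hns₀) with hg₁
  have hg₁inj : Function.Injective g₁ := by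
    rw [← LinearMap.ker_eq_bot]
    apply Submodule.ker_liftQ_eq_bot
    intro a ha
    simp only [LinearMap.mem_ker, LinearMap.toSpanSingleton_apply, smul_eq_mul] at ha
    by_contra han
    exact hs₀
      (by simpa [ha] using (IsLocalRing.notMem_maximalIdeal.mp han).mul_right_eq_zero.mp ha)
  set g₂ : (S ⧸ (n : Submodule S S)) →ₗ[S] S :=
    Submodule.liftQ n (LinearMap.toSpanSingleton S S t) (hq t hnt) with hg₂
  obtain ⟨h, hh⟩ := hGor.out g₁ hg₁inj g₂
  have h1 := hh (Submodule.Quotient.mk 1)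
  simp only [hg₁, hg₂, Submodule.liftQ_apply, LinearMap.toSpanSingleton_apply, one_smul] at h1
  refine ⟨h 1, ?_⟩
  have hs : h s₀ = s₀ * h 1 := by
    conv_lhs => rw [show s₀ = s₀ • (1 : S) by simp]
    rw [map_smul, smul_eq_mul]
  rw [← h1, hs, mul_comm]

theorem stmt12 (S : Type u) [CommRing S] [IsArtinianRing S] [IsLocalRing S]
    (hGor : Module.Injective S S) (I : Ideal S) (hI : I ≠ ⊤)
    [IsLocalRing (S ⧸ I)]
    (E : Type u) [AddCommGroup E] [Module (S ⧸ I) E]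
    (ι : ResidueField (S ⧸ I) →ₗ[S ⧸ I] E)
    (hE : IsInjectiveEnvelopeOfResidueField (S ⧸ I) E ι)
    (h : ∀ r ∈ maximalIdeal (S ⧸ I), ∀ φ : E →ₗ[S ⧸ I] (S ⧸ I), r • φ = 0) :
    maximalIdeal S * Submodule.annihilator (I : Submodule S S) ≤ I := by
  classical
  have hIle : I ≤ maximalIdeal S := IsLocalRing.le_maximalIdeal hI
  -- the quotient map sends the maximal ideal into the maximal ideal
  have hmkmem : ∀ a ∈ maximalIdeal S, Ideal.Quotient.mk I a ∈ maximalIdeal (S ⧸ I) := by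
    intro a ha
    rw [IsLocalRing.mem_maximalIdeal, mem_nonunits_iff]
    intro hu
    obtain ⟨b, hb⟩ := isUnit_iff_exists_inv.mp hu
    obtain ⟨v, rfl⟩ := Ideal.Quotient.mk_surjective b
    rw [← map_mul, ← map_one (Ideal.Quotient.mk I)] at hb
    have hmem : a * v - 1 ∈ I := Ideal.Quotient.eq.mp hb
    have h1n : (1 : S) ∈ maximalIdeal S := by
      have h2 : a * v - (a * v - 1) ∈ maximalIdeal S :=
        Submodule.sub_mem _ (Ideal.mul_mem_right _ _ ha) (hIle hmem)
      simp only [sub_sub_cancel] at h2; exact h2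
    exact (Ideal.ne_top_iff_one _).mp (maximalIdeal.isMaximal S).ne_top h1n
  -- a nonzero socle element of S
  obtain ⟨c0, hc0, hsoc0⟩ := socle_exists_aux (1 : S) one_ne_zero
  set s₀ : S := c0 * 1 with hs₀def
  -- S-module structure on E through the quotient map
  letI : Module S E := Module.compHom E (Ideal.Quotient.mk I)
  have smulE : ∀ (r : S) (x : E), r • x = (Ideal.Quotient.mk I r) • x := fun _ _ => rfl
  have hι1 : ι 1 ≠ 0 := by
    intro hh
    exact one_ne_zero (hE.2.1 (by rw [hh, map_zero]))
  -- residue-field smul computations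
  have hresmul : ∀ r : S ⧸ I, r • (1 : ResidueField (S ⧸ I)) = residue (S ⧸ I) r := by
    intro r; rw [Algebra.smul_def, mul_one]; rfl
  -- the map p : S → E, 1 ↦ ι 1, has kernel the maximal ideal
  set p : S →ₗ[S] E := LinearMap.toSpanSingleton S E (ι 1) with hp
  have hnp : maximalIdeal S ≤ LinearMap.ker p := by
    intro a ha
    have hres0 : residue (S ⧸ I) (Ideal.Quotient.mk I a) = 0 :=
      Ideal.Quotient.eq_zero_iff_mem.mpr (hmkmem a ha)
    rw [LinearMap.mem_ker, hp, LinearMap.toSpanSingleton_apply, smulE, ← map_smul ι, hresmul,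
      hres0, map_zero]
  have hpker : (maximalIdeal S : Submodule S S) = LinearMap.ker p := by
    refine (maximalIdeal.isMaximal S).eq_of_le ?_ hnp
    intro hT
    have : p 1 = 0 := by
      rw [← LinearMap.mem_ker, hT]; exact Submodule.mem_top
    rw [hp, LinearMap.toSpanSingleton_apply, one_smul] at this
    exact hι1 this
  set f : (S ⧸ (maximalIdeal S : Submodule S S)) →ₗ[S] E :=
    Submodule.liftQ (maximalIdeal S) p hnp with hf
  have hfinj : Function.Injective f := by
    rw [← LinearMap.ker_eq_bot]
    exact Submodule.ker_liftQ_eq_bot _ _ _ hpker.ge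
  have hqs₀ : maximalIdeal S ≤ LinearMap.ker (LinearMap.toSpanSingleton S S s₀) := by
    intro a ha
    simp only [LinearMap.mem_ker, LinearMap.toSpanSingleton_apply, smul_eq_mul]
    exact hsoc0 a ha
  set g : (S ⧸ (maximalIdeal S : Submodule S S)) →ₗ[S] S :=
    Submodule.liftQ (maximalIdeal S) (LinearMap.toSpanSingleton S S s₀) hqs₀ with hg
  obtain ⟨θ, hθ⟩ := hGor.out f hfinj g
  have hθι : θ (ι 1) = s₀ := by
    have h1 := hθ (Submodule.Quotient.mk 1)
    simp only [hf, hg, Submodule.liftQ_apply, hp, LinearMap.toSpanSingleton_apply,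
      one_smul] at h1
    exact h1
  -- the image of θ annihilates I
  have hann : ∀ x : E, θ x ∈ Submodule.annihilator (I : Submodule S S) := by
    intro x
    rw [Submodule.mem_annihilator]
    intro i hi
    have hix : (i : S) • x = 0 := by
      rw [smulE, Ideal.Quotient.eq_zero_iff_mem.mpr hi, zero_smul]
    have h2 : i • θ x = 0 := by rw [← map_smul θ, hix, map_zero]
    rw [smul_eq_mul] at h2
    rw [smul_eq_mul, mul_comm]
    exact h2
  -- R-module structure on the annihilator
  have hT : Module.IsTorsionBySet S (↥(Submodule.annihilator (I : Submodule S S)))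
      (I : Set S) := by
    intro x a
    refine Subtype.ext ?_
    have hx := Submodule.mem_annihilator.mp x.2 a.1 a.2
    rw [smul_eq_mul] at hx
    show (a : S) • (x : S) = 0
    rw [smul_eq_mul, mul_comm]
    exact hx
  letI : Module (S ⧸ I) (↥(Submodule.annihilator (I : Submodule S S))) := hT.module
  have hmkA : ∀ (r : S) (x : ↥(Submodule.annihilator (I : Submodule S S))),
      (Ideal.Quotient.mk I r) • x = r • x := fun r x => hT.mk_smul r x
  set θ' : E →ₗ[S ⧸ I] (↥(Submodule.annihilator (I : Submodule S S))) :=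
  { toFun := fun x => ⟨θ x, hann x⟩
    map_add' := fun x y => Subtype.ext (map_add θ x y)
    map_smul' := fun r x => by
      obtain ⟨r', rfl⟩ := Ideal.Quotient.mk_surjective r
      simp only [RingHom.id_apply]
      refine Subtype.ext ?_
      show θ ((Ideal.Quotient.mk I r') • x)
        = ((Ideal.Quotient.mk I r') • (⟨θ x, hann x⟩ :
            ↥(Submodule.annihilator (I : Submodule S S))) : ).1
      rw [hmkA, ← smulE r' x, map_smul]
      rfl } with hθ'def
  have hθ'inj : Function.Injective θ' := by
    rw [← LinearMap.ker_eq_bot]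
    by_contra hker
    obtain ⟨y, hy, hy0⟩ := Submodule.ne_bot_iff _ |>.mp (hE.2.2 _ hker)
    obtain ⟨hyker, hyr⟩ := Submodule.mem_inf.mp hy
    obtain ⟨t, rfl⟩ := hyr
    have ht0 : t ≠ 0 := fun h0 => hy0 (by rw [h0, map_zero])
    obtain ⟨rb, hrb⟩ := residue_surjective t
    obtain ⟨r, rfl⟩ := Ideal.Quotient.mk_surjective rb
    have htmk : (Ideal.Quotient.mk I r) • (1 : ResidueField (S ⧸ I)) = t := by
      rw [hresmul, hrb]
    have hθt : θ (ι t) = r * s₀ := by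
      rw [← htmk, map_smul, ← smulE, map_smul, hθι, smul_eq_mul]
    have hz : θ (ι t) = 0 := by
      rw [LinearMap.mem_ker] at hyker
      exact congrArg Subtype.val hyker
    have hrn : r ∉ maximalIdeal S := by
      intro hrm
      have hres0 : residue (S ⧸ I) (Ideal.Quotient.mk I r) = 0 :=
        Ideal.Quotient.eq_zero_iff_mem.mpr (hmkmem r hrm)
      rw [hrb] at hres0
      exact ht0 hres0
    have hru : IsUnit r := IsLocalRing.notMem_maximalIdeal.mp hrn
    have hrs : r * s₀ = 0 := by rw [← hθt, hz]
    exact hc0 (hru.mul_right_eq_zero.mp hrs)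
  obtain ⟨ρ, hρ⟩ := hE.1.out θ' hθ'inj LinearMap.id
  -- every element of (0 : I) is in the image of θ
  have hsurj : ∀ b ∈ Submodule.annihilator (I : Submodule S S), ∃ x : E, θ x = b := by
    intro b hb
    set x := ρ ⟨b, hb⟩ with hx
    set dd := (⟨b, hb⟩ - θ' x : ↥(Submodule.annihilator (I : Submodule S S))) with hdd
    have hρd : ρ dd = 0 := by
      rw [hdd, map_sub]
      have h3 := hρ x
      simp only [LinearMap.id_coe, id_eq] at h3
      rw [h3, hx, sub_self]
    by_cases hd0 : (dd : S) = 0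
    · refine ⟨x, ?_⟩
      have hdd0 : dd = 0 := Subtype.ext hd0
      rw [hdd] at hdd0
      have h4 := sub_eq_zero.mp hdd0
      exact (congrArg Subtype.val h4).symm
    · exfalso
      obtain ⟨c, hc1, hc2⟩ := socle_exists_aux (dd : S) hd0
      obtain ⟨e, he⟩ := socle_span_aux hGor s₀ hc0 hsoc0 (c * (dd : S)) hc2
      set y : E := e • ι 1 with hy
      have hθy : θ y = c * (dd : S) := by
        rw [hy, map_smul, hθι, smul_eq_mul, ← he]
      have hθ'y : θ' y = c • dd := by
        refine Subtype.ext ?_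
        show θ y = ((c • dd :
          ↥(Submodule.annihilator (I : Submodule S S))) : S)
        rw [hθy]
        rfl
      have hyz : y = 0 := by
        have h3 := hρ y
        simp only [LinearMap.id_coe, id_eq] at h3
        rw [hθ'y, ← hmkA c dd, map_smul, hρd, smul_zero] at h3
        exact h3.symm
      rw [hyz, map_zero] at hθy
      exact hc1 hθy.symm
  -- conclude
  rw [Ideal.mul_le]
  intro a ha b hb
  obtain ⟨x, hx⟩ := hsurj b hb
  set φ : E →ₗ[S ⧸ I] (S ⧸ I) :=
  { toFun := fun z => Ideal.Quotient.mk I (θ z)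
    map_add' := fun z w => by
      show Ideal.Quotient.mk I (θ (z + w)) = _
      rw [map_add, map_add]
    map_smul' := fun r z => by
      obtain ⟨r', rfl⟩ := Ideal.Quotient.mk_surjective r
      show Ideal.Quotient.mk I (θ (Ideal.Quotient.mk I r' • z)) =
        Ideal.Quotient.mk I r' • Ideal.Quotient.mk I (θ z)
      rw [← smulE, map_smul θ, smul_eq_mul, map_mul, smul_eq_mul] } with hφ
  have h0 := h (Ideal.Quotient.mk I a) (hmkmem a ha) φ
  have h1 := LinearMap.congr_fun h0 x
  rw [LinearMap.smul_apply, LinearMap.zero_apply] at h1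
  have h2 : φ x = Ideal.Quotient.mk I b := by
    show Ideal.Quotient.mk I (θ x) = _
    rw [hx]
  rw [h2, smul_eq_mul, ← map_mul] at h1
  exact Ideal.Quotient.eq_zero_iff_mem.mp h1
end

section
/- Let (R,m,k) be an artinian local ring and let E be an injective envelope of k over R. Then Hom_R(E,R) contains an R-submodule L with m·L = 0 and dim_k L = (dim_k soc(R))²; equivalently, there is a short exact sequence 0 → L → Hom_R(E,R) → M → 0 of R-modules with m·L = 0 and dim_k L = (type(R))². -/
open IsLocalRing

universe u

/-!
Matlis duality for the artinian ring `R`. The injective hull `E` of `k` cogenerates, so the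
evaluation map `M → Hom(Hom(M, E), E)` is injective for every `M`; it is bijective on simple
modules since `Hom(k, E) ≅ soc E ≅ k`, and exactness of `Hom(-, E)` with the four lemma carries
bijectivity along a composition series. Hence `R ≅ Hom(Hom(R, E), E) ≅ End E`, and taking socles,
`Hom(E, k) ≅ soc (End E) ≅ soc R ≅ kᵗ`. Finally the socle of `Hom(E, R)` is
`Hom(E, soc R) ≅ Hom(E, k)ᵗ ≅ k^(t²)`.
-/

open LinearMap

namespace Submodule

variable {R : Type*} [CommRing R] {M N : Type*} [AddCommGroup M] [Module R M]
  [AddCommGroup N] [Module R N]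

theorem smul_torsionBySet_eq_bot (I : Ideal R) : I • torsionBySet R M I = ⊥ :=
  eq_bot_iff.mpr <| smul_le.mpr fun r hr x hx =>
    (mem_bot R).mpr <| (mem_torsionBySet_iff _ x).mp hx ⟨r, hr⟩

variable (M N) in
def torsionBySetLinearMapEquiv (s : Set R) :
    torsionBySet R (M →ₗ[R] N) s ≃ₗ[R] (M →ₗ[R] torsionBySet R N s) where
  toFun f := LinearMap.codRestrict _ f.1 fun x =>
    (mem_torsionBySet_iff _ _).mpr fun a =>
      LinearMap.congr_fun ((mem_torsionBySet_iff _ _).mp f.2 a) x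
  invFun g := ⟨(torsionBySet R N s).subtype ∘ₗ g, (mem_torsionBySet_iff _ _).mpr fun a =>
    LinearMap.ext fun x => (mem_torsionBySet_iff _ _).mp (g x).2 a⟩
  map_add' _ _ := rfl
  map_smul' _ _ := rfl
  left_inv _ := rfl
  right_inv _ := rfl

def _root_.LinearEquiv.torsionBySetCongr (e : M ≃ₗ[R] N) (s : Set R) :
    torsionBySet R M s ≃ₗ[R] torsionBySet R N s :=
  e.ofSubmodules _ _ <| by
    ext y
    simp [mem_map_equiv, mem_torsionBySet_iff, ← map_smul]

variable (M) in
def quotientLinearMapEquivTorsionBySet (I : Ideal R) :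
    (R ⧸ I →ₗ[R] M) ≃ₗ[R] torsionBySet R M I where
  toFun f := ⟨f 1, (mem_torsionBySet_iff _ _).mpr fun a => by
    rw [← map_smul, Algebra.smul_def, mul_one, Ideal.Quotient.algebraMap_eq,
      Ideal.Quotient.eq_zero_iff_mem.mpr a.2, map_zero]⟩
  invFun x := I.liftQ (LinearMap.toSpanSingleton R M x) fun r hr =>
    (mem_torsionBySet_iff _ _).mp x.2 ⟨r, hr⟩
  map_add' _ _ := rfl
  map_smul' _ _ := rfl
  left_inv f := by
    ext
    exact one_smul R _
  right_inv x := Subtype.ext (one_smul R _)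

end Submodule

section InjectiveModule

variable {R : Type u} [CommRing R] {E : Type u} [AddCommGroup E] [Module R E]
  [Module.Injective R E]

variable (E) in
theorem LinearMap.lcomp_surjective_of_injective {A B : Type*} [AddCommGroup A] [Module R A]
    [AddCommGroup B] [Module R B] (f : A →ₗ[R] B) (hf : Function.Injective f) :
    Function.Surjective (lcomp R E f) := fun g =>
  (Module.Injective.extension_property R E A B f hf g).imp fun _ h => h

variable (E) in
theorem LinearMap.applyₗ_surjective_of_submodule {M : Type*} [AddCommGroup M] [Module R M]
    (N : Submodule R M)
    (hN : Function.Surjective (applyₗ : N →ₗ[R] (N →ₗ[R] E) →ₗ[R] E))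
    (hQ : Function.Surjective (applyₗ : M ⧸ N →ₗ[R] (M ⧸ N →ₗ[R] E) →ₗ[R] E)) :
    Function.Surjective (applyₗ : M →ₗ[R] (M →ₗ[R] E) →ₗ[R] E) := by
  -- the four lemma for `0 → N → M → M ⧸ N → 0` against its double dual, exact as `E` is injective
  have hdual : Function.Exact (lcomp R E N.mkQ) (lcomp R E N.subtype) :=
    exact_lcomp_of_exact_of_surjective E (exact_subtype_mkQ N) N.mkQ_surjective
  have hbidual : Function.Exact (lcomp R E (lcomp R E N.subtype))
      (lcomp R E (lcomp R E N.mkQ)) :=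
    exact_lcomp_of_exact_of_surjective E hdual
      (lcomp_surjective_of_injective E _ N.subtype_injective)
  have hbidual_surj : Function.Surjective (lcomp R E (lcomp R E N.mkQ)) :=
    lcomp_surjective_of_injective E _ (lcomp_injective_of_surjective _ N.mkQ_surjective)
  exact surjective_of_surjective_of_surjective_of_injective N.subtype N.mkQ
    (0 : M ⧸ N →ₗ[R] PUnit) (lcomp R E (lcomp R E N.subtype)) (lcomp R E (lcomp R E N.mkQ)) 0
    applyₗ applyₗ applyₗ LinearMap.id rfl rfl (by ext)
    ((exact_zero_iff_surjective _ _).mpr N.mkQ_surjective) hbidual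
    ((exact_zero_iff_surjective _ _).mpr hbidual_surj) hN hQ Function.injective_id

end InjectiveModule

section LocalRing

variable {R : Type u} [CommRing R] [IsLocalRing R] {E : Type u} [AddCommGroup E] [Module R E]
  {ι : ResidueField R →ₗ[R] E}

theorem exists_linearMap_apply_ne_zero [Module.Injective R E]
    (hι : Function.Injective ι) {M : Type*} [AddCommGroup M] [Module R M] {x : M}
    (hx : x ≠ 0) : ∃ f : M →ₗ[R] E, f x ≠ 0 := by
  -- `R ∙ x ≅ R ⧸ ann x ↠ k ↪ E`, extended to `M` by injectivity of `E`
  have hle : Ideal.torsionOf R M x ≤ maximalIdeal R :=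
    le_maximalIdeal ((Ideal.torsionOf_eq_top_iff (R := R) x).not.mpr hx)
  let e := Ideal.quotTorsionOfEquivSpanSingleton R M x
  let x' : R ∙ x := ⟨x, Submodule.mem_span_singleton_self x⟩
  obtain ⟨f, hf⟩ := Module.Injective.extension_property R E _ _ (R ∙ x).subtype
    (R ∙ x).subtype_injective (ι ∘ₗ Submodule.factor hle ∘ₗ e.symm)
  have he : e.symm x' = Submodule.Quotient.mk 1 := by
    rw [LinearEquiv.symm_apply_eq, Ideal.quotTorsionOfEquivSpanSingleton_apply_mk, one_smul]
  have hfx : f x = ι (Submodule.factor hle (e.symm x')) := LinearMap.congr_fun hf x'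
  rw [he] at hfx
  exact ⟨f, hfx ▸ (map_ne_zero_iff ι hι).mpr one_ne_zero⟩

theorem LinearMap.applyₗ_injective_of_injective [Module.Injective R E]
    (hι : Function.Injective ι) (M : Type*) [AddCommGroup M] [Module R M] :
    Function.Injective (applyₗ : M →ₗ[R] (M →ₗ[R] E) →ₗ[R] E) :=
  (injective_iff_map_eq_zero _).mpr fun x hx => by
    by_contra hx0
    obtain ⟨f, hf⟩ := exists_linearMap_apply_ne_zero hι hx0
    exact hf (LinearMap.congr_fun hx f)

theorem torsionBySet_maximalIdeal_eq_range
    (hess : ∀ N : Submodule R E, N ≠ ⊥ → N ⊓ LinearMap.range ι ≠ ⊥) :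
    Submodule.torsionBySet R E (maximalIdeal R) = LinearMap.range ι := by
  refine le_antisymm (fun x hx => ?_) ?_
  · obtain rfl | hx0 := eq_or_ne x 0
    · exact zero_mem _
    obtain ⟨y, hy, hy0⟩ := Submodule.ne_bot_iff _ |>.mp <|
      hess _ ((Submodule.span_singleton_eq_bot).not.mpr hx0)
    obtain ⟨hxy, hrx⟩ := Submodule.mem_inf.mp hy
    obtain ⟨r, rfl⟩ := Submodule.mem_span_singleton.mp hxy
    have hr : IsUnit r := by
      by_contra hr
      exact hy0 ((Submodule.mem_torsionBySet_iff _ x).mp hx ⟨r, (mem_maximalIdeal r).mpr hr⟩)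
    simpa [hr.unit_spec, Submodule.smul_mem_iff_of_isUnit _ hr] using hrx
  · rintro _ ⟨c, rfl⟩
    refine (Submodule.mem_torsionBySet_iff _ _).mpr fun a => ?_
    rw [← map_smul, Algebra.smul_def, ResidueField.algebraMap_eq,
      (residue_eq_zero_iff a.1).mpr a.2, zero_mul, map_zero]

theorem isSimpleModule_linearMap (hι : Function.Injective ι)
    (hess : ∀ N : Submodule R E, N ≠ ⊥ → N ⊓ LinearMap.range ι ≠ ⊥)
    (S : Type*) [AddCommGroup S] [Module R S] [IsSimpleModule R S] :
    IsSimpleModule R (S →ₗ[R] E) := by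
  obtain ⟨I, hI, ⟨e⟩⟩ := isSimpleModule_iff_quot_maximal.mp ‹IsSimpleModule R S›
  obtain rfl := eq_maximalIdeal hI
  exact IsSimpleModule.congr <|
    e.arrowCongr (LinearEquiv.refl R E) ≪≫ₗ
    Submodule.quotientLinearMapEquivTorsionBySet E (maximalIdeal R) ≪≫ₗ
    LinearEquiv.ofEq _ _ (torsionBySet_maximalIdeal_eq_range hess) ≪≫ₗ
    (LinearEquiv.ofInjective ι hι).symm ≪≫ₗ (e.symm : ResidueField R ≃ₗ[R] S)

theorem LinearMap.applyₗ_bijective_of_isSimpleModule [Module.Injective R E]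
    (hι : Function.Injective ι) (hess : ∀ N : Submodule R E, N ≠ ⊥ → N ⊓ LinearMap.range ι ≠ ⊥)
    (S : Type*) [AddCommGroup S] [Module R S] [IsSimpleModule R S] :
    Function.Bijective (applyₗ : S →ₗ[R] (S →ₗ[R] E) →ₗ[R] E) := by
  have := isSimpleModule_linearMap hι hess S
  have := isSimpleModule_linearMap hι hess (S →ₗ[R] E)
  refine bijective_of_ne_zero fun h => ?_
  have := IsSimpleModule.nontrivial R S
  obtain ⟨x, hx⟩ := exists_ne (0 : S)
  exact hx (applyₗ_injective_of_injective hι S (by rw [h, LinearMap.zero_apply, map_zero]))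

theorem LinearMap.applyₗ_bijective_of_isFiniteLength [Module.Injective R E]
    (hι : Function.Injective ι) (hess : ∀ N : Submodule R E, N ≠ ⊥ → N ⊓ LinearMap.range ι ≠ ⊥)
    {M : Type*} [AddCommGroup M] [Module R M] (hM : IsFiniteLength R M) :
    Function.Bijective (applyₗ : M →ₗ[R] (M →ₗ[R] E) →ₗ[R] E) := by
  induction hM with
  | of_subsingleton =>
    exact ⟨applyₗ_injective_of_injective hι _, fun g => ⟨0, Subsingleton.elim _ _⟩⟩
  | @of_simple_quotient M _ _ N _ _ ih =>
    exact ⟨applyₗ_injective_of_injective hι M, applyₗ_surjective_of_submodule E N ih.2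
      (applyₗ_bijective_of_isSimpleModule hι hess (M ⧸ N)).2⟩

end LocalRing

namespace IsInjectiveEnvelopeOfResidueField

variable {R : Type u} [CommRing R] [IsLocalRing R] {E : Type u} [AddCommGroup E] [Module R E]
  {ι : ResidueField R →ₗ[R] E}

noncomputable def linearEquivEnd [IsArtinianRing R]
    (hE : IsInjectiveEnvelopeOfResidueField R E ι) : R ≃ₗ[R] Module.End R E :=
  have := hE.1
  LinearEquiv.ofBijective applyₗ (applyₗ_bijective_of_isFiniteLength hE.2.1 hE.2.2
      ((isArtinianRing_iff_isFiniteLength R).mp ‹_›)) ≪≫ₗ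
    (LinearMap.ringLmapEquivSelf R R E).arrowCongr (LinearEquiv.refl R E)

noncomputable def linearMapResidueFieldEquivSocle [IsArtinianRing R]
    (hE : IsInjectiveEnvelopeOfResidueField R E ι) :
    (E →ₗ[R] ResidueField R) ≃ₗ[R] Submodule.torsionBySet R R (maximalIdeal R) :=
  LinearEquiv.congrRight (LinearEquiv.ofInjective ι hE.2.1 ≪≫ₗ
      LinearEquiv.ofEq _ _ (torsionBySet_maximalIdeal_eq_range hE.2.2).symm) ≪≫ₗ
    (Submodule.torsionBySetLinearMapEquiv E E _).symm ≪≫ₗ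
    hE.linearEquivEnd.symm.torsionBySetCongr _

end IsInjectiveEnvelopeOfResidueField

theorem stmt15 (R : Type u) [CommRing R] [IsArtinianRing R] [IsLocalRing R]
    (E : Type u) [AddCommGroup E] [Module R E] (ι : ResidueField R →ₗ[R] E)
    (hE : IsInjectiveEnvelopeOfResidueField R E ι) :
    ∃ L : Submodule R (E →ₗ[R] R),
      maximalIdeal R • L = ⊥ ∧
        ∀ t : ℕ,
          Nonempty ((Submodule.torsionBySet R R (maximalIdeal R : Set R)) ≃ₗ[R]
            (Fin t → ResidueField R)) →
          Nonempty (L ≃ₗ[R] (Fin (t * t) → ResidueField R)) := by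
  refine ⟨Submodule.torsionBySet R (E →ₗ[R] R) (maximalIdeal R),
    Submodule.smul_torsionBySet_eq_bot _, fun t ⟨σ⟩ => ⟨?_⟩⟩
  exact Submodule.torsionBySetLinearMapEquiv E R _ ≪≫ₗ LinearEquiv.congrRight σ ≪≫ₗ
    (LinearEquiv.linearMapPi R).symm ≪≫ₗ
    LinearEquiv.piCongrRight (fun _ => hE.linearMapResidueFieldEquivSocle ≪≫ₗ σ) ≪≫ₗ
    (LinearEquiv.curry R (ResidueField R) (Fin t) (Fin t)).symm ≪≫ₗ
    LinearEquiv.funCongrLeft R (ResidueField R) finProdFinEquiv.symm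
end

section
/- Let (R,m,k) be a commutative Noetherian local ring which is not a field. Then m² = 0 if and only if k is a direct summand of Ω¹(M) for every non-free finitely generated R-module M; moreover, when m² = 0, for every non-free finitely generated R-module M the first syzygy Ω¹(M) is a nonzero k-vector space. -/
open IsLocalRing

universe u

/-- `π : F → M` is a minimal free cover: `F` is finitely generated free, `π` is
surjective, and `ker π ⊆ m·F`. -/
def IsMinimalFreeCover (R : Type u) [CommRing R] [IsLocalRing R]
    {F M : Type u} [AddCommGroup F] [Module R F] [AddCommGroup M] [Module R M]
    (π : F →ₗ[R] M) : Prop :=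
  Module.Free R F ∧ Module.Finite R F ∧ Function.Surjective π ∧
    LinearMap.ker π ≤ (maximalIdeal R) • (⊤ : Submodule R F)

/-- `IsSyzygy R n M N` means that `N` is (isomorphic to) an `n`-th syzygy `Ωⁿ(M)` of `M`,
computed from minimal free covers. -/
def IsSyzygy (R : Type u) [CommRing R] [IsLocalRing R] :
    ℕ → ModuleCat.{u} R → ModuleCat.{u} R → Prop
  | 0, M, N => Nonempty (N ≃ₗ[R] M)
  | n + 1, M, N => ∃ (F : ModuleCat.{u} R) (π : F →ₗ[R] M),
      IsMinimalFreeCover R π ∧ IsSyzygy R n (ModuleCat.of R (LinearMap.ker π)) N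

/-! If `m² = 0`, a first syzygy of `M` lies in `m F`, so it is killed by `m`: a `k`-vector space,
nonzero unless `M` is free, and hence with `k` as a direct summand.

Conversely, a nonzero ideal `J ⊆ m` is a first syzygy of the non-free module `R ⧸ J`, so it
splits off a copy of `k`. Choose `S ⊆ m` maximal among the ideals with `m S = 0` that have a
complement `J` in `m`. Splitting a copy of `k` off `J` would enlarge `S`, so `J = 0`; thus
`m = S` and `m² = m S = 0`. -/

theorem Submodule.le_annihilator_of_le_smul_top {R F : Type*} [CommRing R] [AddCommGroup F]
    [Module R F] {I : Ideal R} (hI : I ^ 2 = ⊥) {K : Submodule R F} (hK : K ≤ I • ⊤) :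
    I ≤ Module.annihilator R K := fun r hr ↦
  Module.mem_annihilator.mpr fun y ↦ Subtype.ext <| by
    have := Submodule.smul_mem_smul hr (hK y.2)
    rwa [← Submodule.mul_smul, ← sq, hI, Submodule.bot_smul, Submodule.mem_bot] at this

theorem LinearMap.nontrivial_ker_of_not_free {R F M : Type*} [CommRing R] [AddCommGroup F]
    [Module R F] [AddCommGroup M] [Module R M] [Module.Free R F] {π : F →ₗ[R] M}
    (hπ : Function.Surjective π) (hM : ¬ Module.Free R M) : Nontrivial (LinearMap.ker π) := by
  rw [Submodule.nontrivial_iff_ne_bot]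
  intro h
  exact hM (.of_equiv (LinearEquiv.ofBijective π ⟨LinearMap.ker_eq_bot.mp h, hπ⟩))

theorem Ideal.not_free_quotient {R : Type*} [CommRing R] {J : Ideal R} (hJ : J ≠ ⊥)
    (hJ' : J ≠ ⊤) : ¬ Module.Free R (R ⧸ J) := by
  intro hfree
  have := Ideal.Quotient.nontrivial_iff.mpr hJ'
  have := (Module.annihilator_eq_bot (R := R) (M := R ⧸ J)).mpr inferInstance
  exact hJ (by rwa [Ideal.annihilator_quotient] at this)

namespace IsLocalRing

variable {R : Type u} [CommRing R] [IsLocalRing R]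

theorem isSemisimpleModule_of_maximalIdeal_le_annihilator {N : Type*} [AddCommGroup N]
    [Module R N] (h : maximalIdeal R ≤ Module.annihilator R N) : IsSemisimpleModule R N := by
  have hN : Module.IsTorsionBySet R N (maximalIdeal R) :=
    (Module.isTorsionBySet_iff_subset_annihilator R N).mpr h
  let := hN.module
  let := Ideal.Quotient.field (maximalIdeal R)
  exact hN.isSemisimpleModule_iff.mp inferInstance

theorem torsionOf_eq_maximalIdeal {N : Type*} [AddCommGroup N] [Module R N]
    (h : maximalIdeal R ≤ Module.annihilator R N) {x : N} (hx : x ≠ 0) :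
    Ideal.torsionOf R N x = maximalIdeal R := by
  refine ((maximalIdeal.isMaximal R).eq_of_le ?_ fun r hr ↦ ?_).symm
  · rwa [Ne, Ideal.torsionOf_eq_top_iff]
  · exact Module.mem_annihilator.mp (h hr) x

theorem residueFieldIsSummand_of_maximalIdeal_le_annihilator {N : Type u} [AddCommGroup N]
    [Module R N] [Nontrivial N] (h : maximalIdeal R ≤ Module.annihilator R N) :
    ResidueFieldIsSummand R N := by
  have := isSemisimpleModule_of_maximalIdeal_le_annihilator h
  obtain ⟨x, hx⟩ := exists_ne (0 : N)
  obtain ⟨q, hq⟩ := exists_isCompl (R ∙ x)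
  exact ⟨R ∙ x, q, hq, ⟨(Ideal.quotTorsionOfEquivSpanSingleton R N x).symm.trans
    (Submodule.quotEquivOfEq _ _ (torsionOf_eq_maximalIdeal h hx))⟩⟩

theorem isSyzygy_one_quotient {J : Ideal R} (hJ : J ≤ maximalIdeal R) :
    IsSyzygy R 1 (ModuleCat.of R (R ⧸ J)) (ModuleCat.of R J) := by
  refine ⟨.of R R, J.mkQ, ⟨inferInstanceAs (Module.Free R R), inferInstanceAs (Module.Finite R R),
    J.mkQ_surjective, ?_⟩, ⟨LinearEquiv.ofEq _ _ J.ker_mkQ.symm⟩⟩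
  simpa [Submodule.ker_mkQ, smul_eq_mul, Ideal.mul_top] using hJ

theorem maximalIdeal_le_annihilator_residueField :
    maximalIdeal R ≤ Module.annihilator R (ResidueField R) := fun r hr ↦
  Module.mem_annihilator.mpr fun w ↦ by
    rw [Algebra.smul_def, ResidueField.algebraMap_eq, (residue_eq_zero_iff r).mpr hr, zero_mul]

theorem exists_disjoint_sup_eq_of_residueFieldIsSummand {J : Ideal R}
    (h : ResidueFieldIsSummand R J) :
    ∃ S J' : Ideal R, S ≠ ⊥ ∧ maximalIdeal R * S = ⊥ ∧ Disjoint S J' ∧ S ⊔ J' = J := by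
  obtain ⟨p, q, hpq, ⟨e⟩⟩ := h
  have hp : p ≠ ⊥ := Submodule.nontrivial_iff_ne_bot.mp e.toEquiv.nontrivial
  refine ⟨p.map J.subtype, q.map J.subtype, ?_, ?_,
    Submodule.disjoint_map J.injective_subtype hpq.disjoint, ?_⟩
  · rwa [Ne, ← Submodule.map_bot J.subtype,
      (Submodule.map_injective_of_injective J.injective_subtype).eq_iff]
  · rw [eq_bot_iff, Ideal.mul_le]
    rintro r hr _ ⟨y, hy, rfl⟩
    have : r • (⟨y, hy⟩ : p) = 0 :=
      Module.mem_annihilator.mp (e.annihilator_eq ▸ maximalIdeal_le_annihilator_residueField hr) _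
    simpa using congrArg (fun z : p ↦ ((z : J) : R)) this
  · rw [← Submodule.map_sup, hpq.sup_eq_top, Submodule.map_subtype_top]

theorem sq_maximalIdeal_eq_bot_of_forall_residueFieldIsSummand [IsNoetherianRing R]
    (h : ∀ J : Ideal R, J ≤ maximalIdeal R → J ≠ ⊥ → ResidueFieldIsSummand R J) :
    maximalIdeal R ^ 2 = ⊥ := by
  obtain ⟨S, ⟨hS, J, hSJ, hm⟩, hmax⟩ := set_has_maximal_iff_noetherian.mpr inferInstance
    {S : Ideal R | maximalIdeal R * S = ⊥ ∧ ∃ J, Disjoint S J ∧ S ⊔ J = maximalIdeal R}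
    ⟨⊥, Ideal.mul_bot _, maximalIdeal R, disjoint_bot_left, bot_sup_eq _⟩
  obtain rfl | hJ := eq_or_ne J ⊥
  · rw [sup_bot_eq] at hm
    rw [sq]
    rwa [hm] at hS
  obtain ⟨S', J', hS'0, hS', hS'J', hsup⟩ :=
    exists_disjoint_sup_eq_of_residueFieldIsSummand (h J (hm ▸ le_sup_right) hJ)
  have hS'J : S' ≤ J := hsup ▸ le_sup_left
  refine absurd (left_lt_sup.mpr fun hle ↦ hS'0 ((hSJ.mono_right hS'J).eq_bot_of_ge hle))
    (hmax (S ⊔ S') ⟨by rw [Ideal.mul_sup, hS, hS', sup_bot_eq], J', ?_, ?_⟩)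
  · exact hS'J'.disjoint_sup_left_of_disjoint_sup_right (hsup ▸ hSJ)
  · rw [sup_assoc, hsup, hm]

end IsLocalRing

namespace IsSyzygy

variable {R : Type u} [CommRing R] [IsLocalRing R] {M N : ModuleCat.{u} R}

theorem nontrivial_of_not_free (hM : ¬ Module.Free R M) (hN : IsSyzygy R 1 M N) :
    Nontrivial N := by
  obtain ⟨F, π, ⟨_, -, hπ, -⟩, ⟨e⟩⟩ := hN
  have := π.nontrivial_ker_of_not_free hπ hM
  exact e.toEquiv.nontrivial

theorem maximalIdeal_le_annihilator (hm : maximalIdeal R ^ 2 = ⊥) (hN : IsSyzygy R 1 M N) :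
    maximalIdeal R ≤ Module.annihilator R N := by
  obtain ⟨F, π, ⟨-, -, -, hker⟩, ⟨e⟩⟩ := hN
  exact e.annihilator_eq ▸ Submodule.le_annihilator_of_le_smul_top hm hker

end IsSyzygy

theorem stmt16_general (R : Type u) [CommRing R] [IsNoetherianRing R] [IsLocalRing R] :
    ((maximalIdeal R) ^ 2 = ⊥ ↔
      ∀ M : ModuleCat.{u} R, Module.Finite R M → ¬ Module.Free R M →
        ∀ N : ModuleCat.{u} R, IsSyzygy R 1 M N → ResidueFieldIsSummand R N) ∧
    ((maximalIdeal R) ^ 2 = ⊥ →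
      ∀ M : ModuleCat.{u} R, Module.Finite R M → ¬ Module.Free R M →
        ∀ N : ModuleCat.{u} R, IsSyzygy R 1 M N →
          Nontrivial N ∧ ∀ r ∈ maximalIdeal R, ∀ x : N, r • x = 0) := by
  refine ⟨⟨fun hm M _ hM N hN ↦ ?_, fun h ↦ ?_⟩, fun hm M _ hM N hN ↦ ?_⟩
  · have := hN.nontrivial_of_not_free hM
    exact residueFieldIsSummand_of_maximalIdeal_le_annihilator (hN.maximalIdeal_le_annihilator hm)
  · refine sq_maximalIdeal_eq_bot_of_forall_residueFieldIsSummand fun J hJ hJ0 ↦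
      h _ (Module.Finite.quotient R J) (Ideal.not_free_quotient hJ0 ?_) _ (isSyzygy_one_quotient hJ)
    exact ne_top_of_le_ne_top (maximalIdeal.isMaximal R).ne_top hJ
  · exact ⟨hN.nontrivial_of_not_free hM,
      fun r hr ↦ Module.mem_annihilator.mp (hN.maximalIdeal_le_annihilator hm hr)⟩

theorem stmt16 (R : Type u) [CommRing R] [IsNoetherianRing R] [IsLocalRing R]
    (hR : ¬ IsField R) :
    ((maximalIdeal R) ^ 2 = ⊥ ↔
      ∀ M : ModuleCat.{u} R, Module.Finite R M → ¬ Module.Free R M →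
        ∀ N : ModuleCat.{u} R, IsSyzygy R 1 M N → ResidueFieldIsSummand R N) ∧
    ((maximalIdeal R) ^ 2 = ⊥ →
      ∀ M : ModuleCat.{u} R, Module.Finite R M → ¬ Module.Free R M →
        ∀ N : ModuleCat.{u} R, IsSyzygy R 1 M N →
          Nontrivial N ∧ ∀ r ∈ maximalIdeal R, ∀ x : N, r • x = 0) :=
  stmt16_general R
end
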